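/- arXiv:1908.07655 — 10 statements merged into one kernel-verified Lean document; each statement's English description precedes it below -/
import Mathlib

section
/- Let 0 < γ₁ < 1 and γ₂ > 1, and define ν(s) = s^{-1-γ₁} for 0 < s ≤ 1 and ν(s) = s^{-1-γ₂} for s > 1. Define f(r) = ∫₀^∞ (1 - e^{-r s}) ν(s) ds for r > 0. Then there exist constants c₁, c₂ > 0 such that c₁ · min(r^{γ₁}, r) ≤ f(r) ≤ c₂ · min(r^{γ₁}, r) for all r > 0. -/
/-!
For `r ≤ 1`, the bound `1 - e^{-x} ≤ x` gives `f r ≤ r ∫ s ν(s) ds`, which is finite because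
`γ₁ < 1 < γ₂`. For `r ≥ 1`, we have `ν(s) ≤ s^{-1-γ₁}`, and the substitution `u = r s` shows that
the Laplace exponent of the density `s^{-1-γ₁}` is `r^{γ₁}` times its value at `1`.

For the lower bound, keep only `s ≤ a := min(1, 1/r)`: there `r s ≤ 1`, so by concavity
`1 - e^{-r s} ≥ (1 - e^{-1}) r s`, whence `f r ≥ (1 - e^{-1}) r a^{1-γ₁} / (1 - γ₁)`, and
`r a^{1-γ₁} = min(r^{γ₁}, r)`.
-/

open MeasureTheory Set Real

noncomputable def laplaceExponent (ν : ℝ → ℝ) (r : ℝ) : ℝ :=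
  ∫ s in Ioi (0 : ℝ), (1 - exp (-(r * s))) * ν s

noncomputable def levyDensity (γ₁ γ₂ s : ℝ) : ℝ :=
  if s ≤ 1 then s ^ (-1 - γ₁) else s ^ (-1 - γ₂)

lemma one_sub_exp_neg_nonneg {x : ℝ} (hx : 0 ≤ x) : 0 ≤ 1 - exp (-x) := by
  simpa using exp_le_one_iff.2 (neg_nonpos.2 hx)

lemma one_sub_exp_neg_le_self (x : ℝ) : 1 - exp (-x) ≤ x := by
  linarith [one_sub_le_exp_neg x]

lemma one_sub_exp_neg_le_one (x : ℝ) : 1 - exp (-x) ≤ 1 := by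
  linarith [exp_pos (-x)]

lemma mul_le_one_sub_exp_neg {x : ℝ} (h0 : 0 ≤ x) (h1 : x ≤ 1) :
    (1 - exp (-1)) * x ≤ 1 - exp (-x) := by
  have := convexOn_exp.2 (mem_univ 0) (mem_univ (-1)) (sub_nonneg.2 h1) h0 (by ring)
  simp only [smul_eq_mul, mul_zero, mul_neg, mul_one, zero_add, exp_zero] at this
  linarith

lemma mul_rpow_neg_one_sub {s : ℝ} (hs : 0 < s) (γ : ℝ) : s * s ^ (-1 - γ) = s ^ (-γ) := by
  have h := rpow_add hs 1 (-1 - γ)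
  rw [rpow_one] at h
  rw [← h]
  ring_nf

lemma integrableOn_Ioc_rpow {p : ℝ} (hp : -1 < p) {a : ℝ} (ha : 0 ≤ a) :
    IntegrableOn (fun s : ℝ => s ^ p) (Ioc 0 a) :=
  (intervalIntegrable_iff_integrableOn_Ioc_of_le ha).1
    (intervalIntegral.intervalIntegrable_rpow' hp)

lemma setIntegral_Ioc_rpow {p : ℝ} (hp : -1 < p) {a : ℝ} (ha : 0 ≤ a) :
    ∫ s in Ioc 0 a, s ^ p = a ^ (p + 1) / (p + 1) := by
  rw [← intervalIntegral.integral_of_le ha, integral_rpow (Or.inl hp),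
    zero_rpow (by linarith), sub_zero]

lemma min_rpow_self_of_le_one {r γ : ℝ} (hr : 0 < r) (hr1 : r ≤ 1) (hγ : γ ≤ 1) :
    min (r ^ γ) r = r :=
  min_eq_right (by simpa using rpow_le_rpow_of_exponent_ge hr hr1 hγ)

lemma min_rpow_self_of_one_le {r γ : ℝ} (hr1 : 1 ≤ r) (hγ : γ ≤ 1) :
    min (r ^ γ) r = r ^ γ :=
  min_eq_left (by simpa using rpow_le_rpow_of_exponent_le hr1 hγ)

lemma mul_min_one_inv_rpow {r γ : ℝ} (hr : 0 < r) (hγ : γ ≤ 1) :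
    r * min 1 r⁻¹ ^ (1 - γ) = min (r ^ γ) r := by
  rcases le_total r 1 with hr1 | hr1
  · rw [min_eq_left (one_le_inv₀ hr |>.2 hr1), one_rpow, mul_one,
      min_rpow_self_of_le_one hr hr1 hγ]
  · rw [min_eq_right (inv_le_one_of_one_le₀ hr1), min_rpow_self_of_one_le hr1 hγ,
      inv_rpow hr.le, ← rpow_neg hr.le]
    conv_lhs => enter [1]; rw [← rpow_one r]
    rw [← rpow_add hr]
    ring_nf

section LaplaceExponent

variable {ν : ℝ → ℝ} {r : ℝ}

lemma laplaceExponent_congr {ν' : ℝ → ℝ} (h : EqOn ν ν' (Ioi 0)) (r : ℝ) :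
    laplaceExponent ν r = laplaceExponent ν' r :=
  setIntegral_congr_fun measurableSet_Ioi fun s hs => by simp only [h hs]

lemma laplaceIntegrand_nonneg (hν : ∀ s ∈ Ioi (0 : ℝ), 0 ≤ ν s) (hr : 0 ≤ r) {s : ℝ}
    (hs : s ∈ Ioi 0) : 0 ≤ (1 - exp (-(r * s))) * ν s :=
  mul_nonneg (one_sub_exp_neg_nonneg (mul_nonneg hr (le_of_lt hs))) (hν s hs)

lemma integrableOn_laplaceIntegrand (hmeas : Measurable ν) (hν : ∀ s ∈ Ioi (0 : ℝ), 0 ≤ ν s)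
    (h0 : IntegrableOn (fun s => s * ν s) (Ioc 0 1)) (h1 : IntegrableOn ν (Ioi 1)) (hr : 0 ≤ r) :
    IntegrableOn (fun s => (1 - exp (-(r * s))) * ν s) (Ioi 0) := by
  have hnorm : ∀ s ∈ Ioi (0 : ℝ), ‖(1 - exp (-(r * s))) * ν s‖ = (1 - exp (-(r * s))) * ν s :=
    fun _ hs => norm_of_nonneg (laplaceIntegrand_nonneg hν hr hs)
  rw [← Ioc_union_Ioi_eq_Ioi zero_le_one]
  refine IntegrableOn.union ?_ ?_
  · refine (h0.const_mul r).mono' (by fun_prop) ?_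
    filter_upwards [ae_restrict_mem measurableSet_Ioc] with s hs
    rw [hnorm s hs.1, ← mul_assoc]
    exact mul_le_mul_of_nonneg_right (one_sub_exp_neg_le_self _) (hν s hs.1)
  · refine h1.mono' (by fun_prop) ?_
    filter_upwards [ae_restrict_mem measurableSet_Ioi] with s hs
    have hs0 : s ∈ Ioi (0 : ℝ) := Ioi_subset_Ioi zero_le_one hs
    rw [hnorm s hs0]
    exact mul_le_of_le_one_left (hν s hs0) (one_sub_exp_neg_le_one _)

lemma laplaceExponent_le_mul_integral (hν : ∀ s ∈ Ioi (0 : ℝ), 0 ≤ ν s)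
    (hint : IntegrableOn (fun s => s * ν s) (Ioi 0)) (hr : 0 ≤ r) :
    laplaceExponent ν r ≤ r * ∫ s in Ioi 0, s * ν s := by
  rw [laplaceExponent, ← integral_const_mul]
  refine integral_mono_of_nonneg ?_ (hint.const_mul r) ?_
  · filter_upwards [ae_restrict_mem measurableSet_Ioi] with s hs
    exact laplaceIntegrand_nonneg hν hr hs
  · filter_upwards [ae_restrict_mem measurableSet_Ioi] with s hs
    rw [← mul_assoc]
    exact mul_le_mul_of_nonneg_right (one_sub_exp_neg_le_self _) (hν s hs)

lemma laplaceExponent_mono {ν' : ℝ → ℝ} (hν : ∀ s ∈ Ioi (0 : ℝ), 0 ≤ ν s)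
    (hle : ∀ s ∈ Ioi (0 : ℝ), ν s ≤ ν' s)
    (hint : IntegrableOn (fun s => (1 - exp (-(r * s))) * ν' s) (Ioi 0)) (hr : 0 ≤ r) :
    laplaceExponent ν r ≤ laplaceExponent ν' r := by
  refine integral_mono_of_nonneg ?_ hint ?_ <;>
    filter_upwards [ae_restrict_mem measurableSet_Ioi] with s hs
  · exact laplaceIntegrand_nonneg hν hr hs
  · exact mul_le_mul_of_nonneg_left (hle s hs)
      (one_sub_exp_neg_nonneg (mul_nonneg hr (le_of_lt hs)))

lemma mul_setIntegral_le_laplaceExponent (hν : ∀ s ∈ Ioi (0 : ℝ), 0 ≤ ν s)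
    (hint : IntegrableOn (fun s => (1 - exp (-(r * s))) * ν s) (Ioi 0)) (hr : 0 ≤ r)
    {a : ℝ} (hra : r * a ≤ 1) :
    (1 - exp (-1)) * r * ∫ s in Ioc 0 a, s * ν s ≤ laplaceExponent ν r := by
  rw [← integral_const_mul]
  calc _ ≤ ∫ s in Ioc 0 a, (1 - exp (-(r * s))) * ν s := by
        refine integral_mono_of_nonneg ?_ (hint.mono_set Ioc_subset_Ioi_self) ?_ <;>
          filter_upwards [ae_restrict_mem measurableSet_Ioc] with s hs
        · exact mul_nonneg (mul_nonneg (one_sub_exp_neg_nonneg zero_le_one) hr)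
            (mul_nonneg hs.1.le (hν s hs.1))
        · rw [mul_assoc, ← mul_assoc r, ← mul_assoc]
          have hrs : r * s ≤ 1 := (mul_le_mul_of_nonneg_left hs.2 hr).trans hra
          exact mul_le_mul_of_nonneg_right (mul_le_one_sub_exp_neg (mul_nonneg hr hs.1.le) hrs)
            (hν s hs.1)
    _ ≤ laplaceExponent ν r := by
        refine setIntegral_mono_set hint ?_ Ioc_subset_Ioi_self.eventuallyLE
        filter_upwards [ae_restrict_mem measurableSet_Ioi] with s hs
        exact laplaceIntegrand_nonneg hν hr hs

lemma laplaceExponent_rpow (hr : 0 < r) (γ : ℝ) :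
    laplaceExponent (fun s => s ^ (-1 - γ)) r =
      r ^ γ * laplaceExponent (fun s => s ^ (-1 - γ)) 1 := by
  set g : ℝ → ℝ := fun u => (1 - exp (-u)) * u ^ (-1 - γ)
  have hscale : EqOn (fun s => (1 - exp (-(r * s))) * s ^ (-1 - γ))
      (fun s => r ^ (1 + γ) * g (r * s)) (Ioi 0) := fun s hs => by
    simp only [g, mul_rpow hr.le (le_of_lt hs)]
    rw [mul_left_comm, ← mul_assoc (r ^ (1 + γ)), ← rpow_add hr]
    simp
  rw [laplaceExponent, setIntegral_congr_fun measurableSet_Ioi hscale, integral_const_mul,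
    integral_comp_mul_left_Ioi g 0 hr, mul_zero, laplaceExponent]
  simp only [g, one_mul, smul_eq_mul, ← mul_assoc, ← rpow_neg_one r, ← rpow_add hr]
  ring_nf

end LaplaceExponent

lemma integrableOn_laplaceIntegrand_rpow {γ : ℝ} (hγ : 0 < γ) (hγ' : γ < 1) {r : ℝ}
    (hr : 0 ≤ r) : IntegrableOn (fun s => (1 - exp (-(r * s))) * s ^ (-1 - γ)) (Ioi 0) := by
  refine integrableOn_laplaceIntegrand (by fun_prop) (fun s hs => rpow_nonneg (le_of_lt hs) _)
    ?_ (integrableOn_Ioi_rpow_of_lt (by linarith) zero_lt_one) hr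
  refine (integrableOn_Ioc_rpow (p := -γ) (by linarith) zero_le_one).congr_fun
    (fun s hs => (mul_rpow_neg_one_sub hs.1 γ).symm) measurableSet_Ioc

section LevyDensity

variable {γ₁ γ₂ : ℝ}

lemma levyDensity_nonneg {s : ℝ} (hs : 0 ≤ s) : 0 ≤ levyDensity γ₁ γ₂ s := by
  unfold levyDensity
  split_ifs <;> exact rpow_nonneg hs _

lemma levyDensity_le_rpow (hγ : γ₁ ≤ γ₂) (s : ℝ) :
    levyDensity γ₁ γ₂ s ≤ s ^ (-1 - γ₁) := by
  unfold levyDensity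
  split_ifs with hs1
  · exact le_rfl
  · exact rpow_le_rpow_of_exponent_le (le_of_lt (not_le.1 hs1)) (by linarith)

lemma measurable_levyDensity : Measurable (levyDensity γ₁ γ₂) :=
  Measurable.ite measurableSet_Iic (by fun_prop) (by fun_prop)

lemma mul_levyDensity_eqOn_Ioc :
    EqOn (fun s => s * levyDensity γ₁ γ₂ s) (fun s => s ^ (-γ₁)) (Ioc 0 1) := fun s hs => by
  simp only [levyDensity, if_pos hs.2, mul_rpow_neg_one_sub hs.1]

lemma levyDensity_eqOn_Ioi : EqOn (levyDensity γ₁ γ₂) (fun s => s ^ (-1 - γ₂)) (Ioi 1) :=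
  fun _ hs => if_neg (not_le.2 hs)

lemma integrableOn_mul_levyDensity (hγ₁ : γ₁ < 1) (hγ₂ : 1 < γ₂) :
    IntegrableOn (fun s => s * levyDensity γ₁ γ₂ s) (Ioi 0) := by
  rw [← Ioc_union_Ioi_eq_Ioi zero_le_one]
  refine IntegrableOn.union ?_ ?_
  · exact (integrableOn_Ioc_rpow (by linarith) zero_le_one).congr_fun
      mul_levyDensity_eqOn_Ioc.symm measurableSet_Ioc
  · refine (integrableOn_Ioi_rpow_of_lt (a := -γ₂) (by linarith) zero_lt_one).congr_fun
      (fun s hs => ?_) measurableSet_Ioi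
    rw [levyDensity_eqOn_Ioi hs, mul_rpow_neg_one_sub (zero_lt_one.trans hs)]

lemma setIntegral_Ioc_mul_levyDensity (hγ₁ : γ₁ < 1) {a : ℝ} (ha : 0 ≤ a) (ha1 : a ≤ 1) :
    ∫ s in Ioc 0 a, s * levyDensity γ₁ γ₂ s = a ^ (1 - γ₁) / (1 - γ₁) := by
  rw [setIntegral_congr_fun measurableSet_Ioc
      (mul_levyDensity_eqOn_Ioc.mono (Ioc_subset_Ioc_right ha1)),
    setIntegral_Ioc_rpow (by linarith) ha, neg_add_eq_sub]

lemma integrableOn_laplaceIntegrand_levyDensity (hγ₁ : γ₁ < 1) (hγ₂ : 1 < γ₂) {r : ℝ}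
    (hr : 0 ≤ r) : IntegrableOn (fun s => (1 - exp (-(r * s))) * levyDensity γ₁ γ₂ s) (Ioi 0) :=
  integrableOn_laplaceIntegrand measurable_levyDensity
    (fun _ hs => levyDensity_nonneg (le_of_lt hs))
    ((integrableOn_mul_levyDensity hγ₁ hγ₂).mono_set Ioc_subset_Ioi_self)
    ((integrableOn_Ioi_rpow_of_lt (by linarith) zero_lt_one).congr_fun
      levyDensity_eqOn_Ioi.symm measurableSet_Ioi) hr

lemma laplaceExponent_levyDensity_ge (hγ₁' : γ₁ < 1) (hγ₂ : 1 < γ₂) {r : ℝ}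
    (hr : 0 < r) :
    (1 - exp (-1)) / (1 - γ₁) * min (r ^ γ₁) r ≤ laplaceExponent (levyDensity γ₁ γ₂) r := by
  have ha : r * min 1 r⁻¹ ≤ 1 :=
    (mul_le_mul_of_nonneg_left (min_le_right _ _) hr.le).trans (mul_inv_cancel₀ hr.ne').le
  calc (1 - exp (-1)) / (1 - γ₁) * min (r ^ γ₁) r
      = (1 - exp (-1)) * r * ∫ s in Ioc 0 (min 1 r⁻¹), s * levyDensity γ₁ γ₂ s := by
        rw [setIntegral_Ioc_mul_levyDensity hγ₁' (by positivity) (min_le_left _ _),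
          ← mul_min_one_inv_rpow hr hγ₁'.le]
        ring
    _ ≤ laplaceExponent (levyDensity γ₁ γ₂) r :=
        mul_setIntegral_le_laplaceExponent (fun _ hs => levyDensity_nonneg (le_of_lt hs))
          (integrableOn_laplaceIntegrand_levyDensity hγ₁' hγ₂ hr.le) hr.le ha

lemma laplaceExponent_levyDensity_le (hγ₁ : 0 < γ₁) (hγ₁' : γ₁ < 1) (hγ₂ : 1 < γ₂) {r : ℝ}
    (hr : 0 < r) :
    laplaceExponent (levyDensity γ₁ γ₂) r ≤
      max (laplaceExponent (fun s => s ^ (-1 - γ₁)) 1) (∫ s in Ioi 0, s * levyDensity γ₁ γ₂ s) *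
        min (r ^ γ₁) r := by
  have hν : ∀ s ∈ Ioi (0 : ℝ), 0 ≤ levyDensity γ₁ γ₂ s :=
    fun _ hs => levyDensity_nonneg (le_of_lt hs)
  have hmin : 0 ≤ min (r ^ γ₁) r := le_min (by positivity) hr.le
  rcases le_total r 1 with hr1 | hr1
  · calc laplaceExponent (levyDensity γ₁ γ₂) r
        ≤ (∫ s in Ioi 0, s * levyDensity γ₁ γ₂ s) * min (r ^ γ₁) r := by
          rw [min_rpow_self_of_le_one hr hr1 hγ₁'.le, mul_comm]
          exact laplaceExponent_le_mul_integral hν (integrableOn_mul_levyDensity hγ₁' hγ₂) hr.le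
      _ ≤ _ := mul_le_mul_of_nonneg_right (le_max_right _ _) hmin
  · calc laplaceExponent (levyDensity γ₁ γ₂) r
        ≤ laplaceExponent (fun s => s ^ (-1 - γ₁)) r :=
          laplaceExponent_mono hν (fun s _ => levyDensity_le_rpow (by linarith) s)
            (integrableOn_laplaceIntegrand_rpow hγ₁ hγ₁' hr.le) hr.le
      _ = laplaceExponent (fun s => s ^ (-1 - γ₁)) 1 * min (r ^ γ₁) r := by
          rw [laplaceExponent_rpow hr, min_rpow_self_of_one_le hr1 hγ₁'.le, mul_comm]
      _ ≤ _ := mul_le_mul_of_nonneg_right (le_max_left _ _) hmin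

end LevyDensity

/-- two-sided bounds for the Laplace exponent of the subordinator
with Lévy density `ν(s) = s^{-1-γ₁}` for `0 < s ≤ 1` and `s^{-1-γ₂}` for `s > 1`. -/
theorem stmt_0 (γ₁ γ₂ : ℝ) (hγ₁ : 0 < γ₁) (hγ₁' : γ₁ < 1) (hγ₂ : 1 < γ₂)
    (ν : ℝ → ℝ)
    (hν : ∀ s : ℝ, 0 < s → ν s = if s ≤ 1 then s ^ (-1 - γ₁) else s ^ (-1 - γ₂))
    (f : ℝ → ℝ)
    (hf : ∀ r : ℝ, 0 < r →
      f r = ∫ s in Ioi (0 : ℝ), (1 - Real.exp (-(r * s))) * ν s) :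
    ∃ c₁ c₂ : ℝ, 0 < c₁ ∧ 0 < c₂ ∧
      ∀ r : ℝ, 0 < r → c₁ * min (r ^ γ₁) r ≤ f r ∧ f r ≤ c₂ * min (r ^ γ₁) r := by
  set c₁ := (1 - exp (-1)) / (1 - γ₁)
  set c₂ := max (laplaceExponent (fun s => s ^ (-1 - γ₁)) 1)
    (∫ s in Ioi 0, s * levyDensity γ₁ γ₂ s)
  have hc₁ : 0 < c₁ := div_pos (by simp) (by linarith)
  have hbounds : ∀ r : ℝ, 0 < r → c₁ * min (r ^ γ₁) r ≤ f r ∧ f r ≤ c₂ * min (r ^ γ₁) r := by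
    intro r hr
    rw [hf r hr, ← laplaceExponent, laplaceExponent_congr (fun s hs => hν s hs) r]
    exact ⟨laplaceExponent_levyDensity_ge hγ₁' hγ₂ hr,
      laplaceExponent_levyDensity_le hγ₁ hγ₁' hγ₂ hr⟩
  have hc₂ : 0 < c₂ := by
    have h := hbounds 1 one_pos
    simp only [one_rpow, min_self, mul_one] at h
    linarith
  exact ⟨c₁, c₂, hc₁, hc₂, hbounds⟩
end

section
/- Let φ : (0,∞) → (0,∞) be measurable with 0 < ∫₀^1 s/φ(s) ds < ∞, and suppose there exist constants c > 0 and β* with 1 < β* < 2 such that φ(R)/φ(r) ≥ c (R/r)^{β*} for all 1 ≤ r ≤ R. Then there exists a constant C > 0 such that for every r ≥ 1 and every integer n ≥ 0, ∫₀^{2ⁿ r} s/φ(s) ds ≤ C · 2^{n(2-β*)} · ∫₀^r s/φ(s) ds. -/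
/-!
Write `I r = ∫₀^r s/φ(s) ds`. On `[r, T]` the scaling bound gives
`s/φ(s) ≤ r^β s^{1-β}/(c φ(r))`, and integrating,
`I T - I r ≤ (T/r)^{2-β} r²/(c(2-β)φ(r))`; this is where `β < 2` enters. On `[1, r]` it gives `φ(s) ≤ φ(r)/c`, hence
`I r - I 1 ≥ c(r² - 1)/(2φ(r))`, which together with `φ(r) ≥ c φ(1)` and `I 1 > 0` bounds
`r²/φ(r)` by a multiple of `I r`. Taking `T = 2ⁿ r` combines the two.
-/

open MeasureTheory Set Real

theorem setIntegral_Ioc_eq_add {f : ℝ → ℝ} {a b c : ℝ} (hab : a ≤ b) (hbc : b ≤ c)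
    (hf₁ : IntegrableOn f (Ioc a b)) (hf₂ : IntegrableOn f (Ioc b c)) :
    ∫ x in Ioc a c, f x = (∫ x in Ioc a b, f x) + ∫ x in Ioc b c, f x := by
  rw [← Ioc_union_Ioc_eq_Ioc hab hbc]
  exact setIntegral_union (Ioc_disjoint_Ioc_of_le le_rfl) measurableSet_Ioc hf₁ hf₂

section LowerScaling

variable {φ : ℝ → ℝ} {c β : ℝ}

theorem mul_rpow_mul_le_of_scaling (hφpos : ∀ s : ℝ, 0 < s → 0 < φ s)
    (hscale : ∀ r R : ℝ, 1 ≤ r → r ≤ R → c * (R / r) ^ β ≤ φ R / φ r)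
    {r R : ℝ} (hr : 1 ≤ r) (hrR : r ≤ R) : c * (R / r) ^ β * φ r ≤ φ R :=
  (le_div_iff₀ (hφpos r (by linarith))).1 (hscale r R hr hrR)

theorem mul_le_of_scaling (hφpos : ∀ s : ℝ, 0 < s → 0 < φ s)
    (hscale : ∀ r R : ℝ, 1 ≤ r → r ≤ R → c * (R / r) ^ β ≤ φ R / φ r)
    (hc : 0 ≤ c) (hβ : 0 ≤ β) {s r : ℝ} (hs : 1 ≤ s) (hsr : s ≤ r) :
    c * φ s ≤ φ r := by
  have hratio : 1 ≤ (r / s) ^ β := one_le_rpow ((one_le_div (by linarith)).2 hsr) hβ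
  calc c * φ s ≤ c * (r / s) ^ β * φ s := by
        have := (hφpos s (by linarith)).le
        gcongr
        exact le_mul_of_one_le_right hc hratio
    _ ≤ φ r := mul_rpow_mul_le_of_scaling hφpos hscale hs hsr

theorem div_le_rpow_of_scaling (hφpos : ∀ s : ℝ, 0 < s → 0 < φ s)
    (hscale : ∀ r R : ℝ, 1 ≤ r → r ≤ R → c * (R / r) ^ β ≤ φ R / φ r)
    (hc : 0 < c) {r s : ℝ} (hr : 1 ≤ r) (hrs : r ≤ s) :
    s / φ s ≤ r ^ β / (c * φ r) * s ^ (1 - β) := by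
  have hr0 : 0 < r := by linarith
  have hs0 : 0 < s := by linarith
  have hφr := hφpos r hr0
  have key := mul_rpow_mul_le_of_scaling hφpos hscale hr hrs
  rw [div_rpow hs0.le hr0.le] at key
  calc s / φ s ≤ s / (c * (s ^ β / r ^ β) * φ r) :=
        div_le_div_of_nonneg_left hs0.le (by positivity) key
    _ = r ^ β / (c * φ r) * s ^ (1 - β) := by
        rw [rpow_sub hs0, rpow_one]
        field_simp

theorem div_mul_le_of_scaling (hφpos : ∀ s : ℝ, 0 < s → 0 < φ s)
    (hscale : ∀ r R : ℝ, 1 ≤ r → r ≤ R → c * (R / r) ^ β ≤ φ R / φ r)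
    (hc : 0 ≤ c) (hβ : 0 ≤ β) {s r : ℝ} (hs : 1 ≤ s) (hsr : s ≤ r) :
    c / φ r * s ≤ s / φ s := by
  have hs0 : 0 < s := by linarith
  rw [div_mul_eq_mul_div, div_le_div_iff₀ (hφpos r (by linarith)) (hφpos s hs0)]
  nlinarith [mul_le_of_scaling hφpos hscale hc hβ hs hsr]

theorem integrableOn_Ioc_of_scaling (hφmeas : Measurable φ)
    (hφpos : ∀ s : ℝ, 0 < s → 0 < φ s)
    (hscale : ∀ r R : ℝ, 1 ≤ r → r ≤ R → c * (R / r) ^ β ≤ φ R / φ r)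
    (hc : 0 < c) {a b : ℝ} (ha : 1 ≤ a) :
    IntegrableOn (fun s => s / φ s) (Ioc a b) := by
  have hrpow : ContinuousOn (fun s : ℝ => s ^ (1 - β)) (Icc a b) := fun s hs =>
    (continuousAt_rpow_const s _ (Or.inl (by linarith [hs.1]))).continuousWithinAt
  have hdom : IntegrableOn (fun s => a ^ β / (c * φ a) * s ^ (1 - β)) (Ioc a b) :=
    (hrpow.integrableOn_Icc.mono_set Ioc_subset_Icc_self).const_mul _
  refine hdom.mono' (measurable_id.div hφmeas).aestronglyMeasurable ?_
  filter_upwards [ae_restrict_mem measurableSet_Ioc] with s hs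
  have hs0 : 0 < s := by linarith [hs.1]
  rw [norm_of_nonneg (div_nonneg hs0.le (hφpos s hs0).le)]
  exact div_le_rpow_of_scaling hφpos hscale hc ha hs.1.le

theorem integrableOn_Ioc_zero_of_scaling (hφmeas : Measurable φ)
    (hφpos : ∀ s : ℝ, 0 < s → 0 < φ s) (hint : IntegrableOn (fun s => s / φ s) (Ioc 0 1))
    (hscale : ∀ r R : ℝ, 1 ≤ r → r ≤ R → c * (R / r) ^ β ≤ φ R / φ r)
    (hc : 0 < c) {b : ℝ} (hb : 1 ≤ b) :
    IntegrableOn (fun s => s / φ s) (Ioc 0 b) := by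
  rw [← Ioc_union_Ioc_eq_Ioc zero_le_one hb]
  exact hint.union (integrableOn_Ioc_of_scaling hφmeas hφpos hscale hc le_rfl)

theorem integral_Ioc_le_of_scaling (hφmeas : Measurable φ)
    (hφpos : ∀ s : ℝ, 0 < s → 0 < φ s)
    (hscale : ∀ r R : ℝ, 1 ≤ r → r ≤ R → c * (R / r) ^ β ≤ φ R / φ r)
    (hc : 0 < c) (hβ : β < 2) {r T : ℝ} (hr : 1 ≤ r) (hrT : r ≤ T) :
    ∫ s in Ioc r T, s / φ s ≤ (T / r) ^ (2 - β) * (r ^ 2 / φ r) / (c * (2 - β)) := by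
  have hr0 : 0 < r := by linarith
  have hφr := hφpos r hr0
  have h2β : 0 < 2 - β := by linarith
  have hrpow : IntegrableOn (fun s : ℝ => s ^ (1 - β)) (Ioc r T) :=
    (intervalIntegral.intervalIntegrable_rpow' (by linarith)).1
  calc ∫ s in Ioc r T, s / φ s ≤ ∫ s in Ioc r T, r ^ β / (c * φ r) * s ^ (1 - β) :=
        setIntegral_mono_on (integrableOn_Ioc_of_scaling hφmeas hφpos hscale hc hr)
          (hrpow.const_mul _) measurableSet_Ioc fun s hs =>
          div_le_rpow_of_scaling hφpos hscale hc hr hs.1.le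
    _ = r ^ β / (c * φ r) * ((T ^ (2 - β) - r ^ (2 - β)) / (2 - β)) := by
        rw [integral_const_mul, ← intervalIntegral.integral_of_le hrT,
          integral_rpow (Or.inl (by linarith)), show 1 - β + 1 = 2 - β by ring]
    _ ≤ r ^ β / (c * φ r) * (T ^ (2 - β) / (2 - β)) := by
        have := rpow_nonneg hr0.le (2 - β)
        gcongr
        linarith
    _ = (T / r) ^ (2 - β) * (r ^ 2 / φ r) / (c * (2 - β)) := by
        have hsq : r ^ β * r ^ (2 - β) = r ^ 2 := by
          rw [← rpow_add hr0, add_sub_cancel, rpow_two]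
        rw [div_rpow (by linarith) hr0.le, ← hsq]
        field_simp

theorem integral_Ioc_one_ge_of_scaling (hφpos : ∀ s : ℝ, 0 < s → 0 < φ s)
    (hscale : ∀ r R : ℝ, 1 ≤ r → r ≤ R → c * (R / r) ^ β ≤ φ R / φ r)
    (hc : 0 ≤ c) (hβ : 0 ≤ β) {r : ℝ} (hr : 1 ≤ r)
    (hint : IntegrableOn (fun s => s / φ s) (Ioc 1 r)) :
    c * (r ^ 2 - 1) / (2 * φ r) ≤ ∫ s in Ioc 1 r, s / φ s :=
  calc c * (r ^ 2 - 1) / (2 * φ r) = ∫ s in Ioc 1 r, c / φ r * s := by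
        rw [integral_const_mul, ← intervalIntegral.integral_of_le hr, integral_id]
        ring
    _ ≤ ∫ s in Ioc 1 r, s / φ s :=
        setIntegral_mono_on ((continuous_const.mul continuous_id).integrableOn_Ioc) hint
          measurableSet_Ioc
          fun s hs => div_mul_le_of_scaling hφpos hscale hc hβ hs.1.le hs.2

theorem sq_div_le_mul_integral_of_scaling (hφmeas : Measurable φ)
    (hφpos : ∀ s : ℝ, 0 < s → 0 < φ s) (hint : IntegrableOn (fun s => s / φ s) (Ioc 0 1))
    (hintpos : 0 < ∫ s in Ioc (0 : ℝ) 1, s / φ s)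
    (hscale : ∀ r R : ℝ, 1 ≤ r → r ≤ R → c * (R / r) ^ β ≤ φ R / φ r)
    (hc : 0 < c) (hβ : 0 ≤ β) {r : ℝ} (hr : 1 ≤ r) :
    r ^ 2 / φ r ≤
      (2 / c + 1 / (c * φ 1 * ∫ s in Ioc (0 : ℝ) 1, s / φ s)) *
        ∫ s in Ioc (0 : ℝ) r, s / φ s := by
  set I₁ := ∫ s in Ioc (0 : ℝ) 1, s / φ s
  have hφ1 := hφpos 1 one_pos
  have hφr := hφpos r (by linarith)
  have hint₁ := integrableOn_Ioc_of_scaling hφmeas hφpos hscale hc (b := r) le_rfl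
  have hJ := integral_Ioc_one_ge_of_scaling hφpos hscale hc.le hβ hr hint₁
  have hA0 : 0 ≤ c * (r ^ 2 - 1) / (2 * φ r) :=
    div_nonneg (mul_nonneg hc.le (by nlinarith)) (by positivity)
  have hφ : c * φ 1 ≤ φ r := mul_le_of_scaling hφpos hscale hc.le hβ le_rfl hr
  rw [setIntegral_Ioc_eq_add zero_le_one hr hint hint₁]
  have hI₁ : c * φ 1 * I₁ / φ r ≤ I₁ :=
    div_le_of_le_mul₀ hφr.le hintpos.le (by nlinarith)
  have hJ0 : 0 ≤ ∫ s in Ioc 1 r, s / φ s := hA0.trans hJ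
  calc r ^ 2 / φ r
      = 2 / c * (c * (r ^ 2 - 1) / (2 * φ r)) +
          1 / (c * φ 1 * I₁) * (c * φ 1 * I₁ / φ r) := by
        field_simp
        ring
    _ ≤ 2 / c * (∫ s in Ioc 1 r, s / φ s) + 1 / (c * φ 1 * I₁) * I₁ := by gcongr
    _ ≤ (2 / c + 1 / (c * φ 1 * I₁)) * (I₁ + ∫ s in Ioc 1 r, s / φ s) := by
        rw [add_mul, mul_add, mul_add]
        linarith [show 0 ≤ 2 / c * I₁ by positivity,
          show 0 ≤ 1 / (c * φ 1 * I₁) * ∫ s in Ioc 1 r, s / φ s by positivity]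

end LowerScaling

/-- under a lower scaling bound with index `1 < β* < 2` for `φ` on `[1,∞)`,
`∫₀^{2ⁿ r} s/φ(s) ds ≤ C 2^{n(2-β*)} ∫₀^r s/φ(s) ds` for all `r ≥ 1` and `n ≥ 0`. -/
theorem stmt_3 (φ : ℝ → ℝ) (hφmeas : Measurable φ) (hφpos : ∀ s : ℝ, 0 < s → 0 < φ s)
    (hint : IntegrableOn (fun s => s / φ s) (Ioc 0 1))
    (hintpos : 0 < ∫ s in Ioc (0 : ℝ) 1, s / φ s)
    (c β : ℝ) (hc : 0 < c) (hβ : 1 < β) (hβ' : β < 2)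
    (hscale : ∀ r R : ℝ, 1 ≤ r → r ≤ R → c * (R / r) ^ β ≤ φ R / φ r) :
    ∃ C : ℝ, 0 < C ∧ ∀ r : ℝ, 1 ≤ r → ∀ n : ℕ,
      IntegrableOn (fun s => s / φ s) (Ioc 0 ((2 : ℝ) ^ n * r)) ∧
      (∫ s in Ioc (0 : ℝ) ((2 : ℝ) ^ n * r), s / φ s) ≤
        C * (2 : ℝ) ^ ((n : ℝ) * (2 - β)) * ∫ s in Ioc (0 : ℝ) r, s / φ s := by
  set M := 2 / c + 1 / (c * φ 1 * ∫ s in Ioc (0 : ℝ) 1, s / φ s)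
  have hM : 0 < M := by have := hφpos 1 one_pos; positivity
  have h2β : 0 < 2 - β := by linarith
  refine ⟨1 + M / (c * (2 - β)), by positivity, fun r hr n => ?_⟩
  have hr0 : 0 < r := by linarith
  have hrT : r ≤ 2 ^ n * r := le_mul_of_one_le_left hr0.le (one_le_pow₀ one_le_two)
  have hE : ((2 : ℝ) ^ n * r / r) ^ (2 - β) = (2 : ℝ) ^ ((n : ℝ) * (2 - β)) := by
    rw [mul_div_cancel_right₀ _ hr0.ne', ← rpow_natCast, ← rpow_mul zero_le_two]
  have hE1 : 1 ≤ (2 : ℝ) ^ ((n : ℝ) * (2 - β)) := one_le_rpow one_le_two (by positivity)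
  have hIr : 0 ≤ ∫ s in Ioc (0 : ℝ) r, s / φ s :=
    setIntegral_nonneg measurableSet_Ioc fun s hs => div_nonneg hs.1.le (hφpos s hs.1).le
  have hint₀ := integrableOn_Ioc_zero_of_scaling hφmeas hφpos hint hscale hc hr
  refine ⟨integrableOn_Ioc_zero_of_scaling hφmeas hφpos hint hscale hc (hr.trans hrT), ?_⟩
  rw [setIntegral_Ioc_eq_add hr0.le hrT hint₀
    (integrableOn_Ioc_of_scaling hφmeas hφpos hscale hc hr)]
  have htail := integral_Ioc_le_of_scaling hφmeas hφpos hscale hc hβ' hr hrT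
  have hkey :=
    sq_div_le_mul_integral_of_scaling hφmeas hφpos hint hintpos hscale hc (by linarith) hr
  rw [hE] at htail
  set E := (2 : ℝ) ^ ((n : ℝ) * (2 - β))
  set I := ∫ s in Ioc (0 : ℝ) r, s / φ s
  calc I + ∫ s in Ioc r (2 ^ n * r), s / φ s
      ≤ I + E * (r ^ 2 / φ r) / (c * (2 - β)) := by gcongr
    _ ≤ I + E * (M * I) / (c * (2 - β)) := by gcongr
    _ ≤ E * I + E * (M * I) / (c * (2 - β)) := by gcongr; exact le_mul_of_one_le_left hIr hE1
    _ = (1 + M / (c * (2 - β))) * E * I := by ring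
end

section
/- Let φ_j : (0,∞) → (0,∞) be strictly increasing and continuous with φ_j(1) = 1, and suppose: (i) there exist constants c, c' > 0 and 0 < β₁ ≤ β₂ < 2 with c (R/r)^{β₁} ≤ φ_j(R)/φ_j(r) ≤ c' (R/r)^{β₂} for all 0 < r ≤ R ≤ 1; (ii) there exist constants C, C' > 0 and 1 < β₁* ≤ β₂* < ∞ with C (R/r)^{β₁*} ≤ φ_j(R)/φ_j(r) ≤ C' (R/r)^{β₂*} for all 1 ≤ r ≤ R. Define Φ(r) = r²/(2 ∫₀^r s/φ_j(s) ds) for r > 0, and define φ_c(r) = r² for 0 < r ≤ 1 and φ_c(r) = Φ(r)/Φ(1) for r ≥ 1. Then there exist constants c₀ > 0 and β ∈ (1,2] such that c₀ (R/r)^{β} ≤ φ_c(R)/φ_c(r) ≤ (R/r)² for all 0 < r ≤ R. -/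
/-!
With `I r = ∫₀^r s / φ s ds` one has `φ_c r = I 1 * r ^ 2 / I (max r 1)` for all `r > 0`, so
`φ_c R / φ_c r = (R / r) ^ 2 * I (max r 1) / I (max R 1)`; since `I` is increasing this is at most
`(R / r) ^ 2`. For the lower bound take `1 < β < 2` below `β₁*`. On `[r, R]` with `1 ≤ r` the lower
scaling `φ s ≥ C (s / r) ^ β φ r` gives `∫_r^R s / φ s ds ≲ (R / r) ^ (2 - β) r ^ 2 / φ r`, and
`r ^ 2 / (2 φ r) ≤ I r` by monotonicity of `φ`, so `I R ≤ K (R / r) ^ (2 - β) I r`, which is the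
lower bound `K⁻¹ (R / r) ^ β`. The upper index `β₂ < 2` near `0` makes `I` finite.
-/

open MeasureTheory Set Real

noncomputable def cumIntegral (φ : ℝ → ℝ) (r : ℝ) : ℝ := ∫ s in Ioc 0 r, s / φ s

lemma integrableOn_Ioc_zero_of_norm_le_rpow {f : ℝ → ℝ} {b M p : ℝ} (hb : 0 ≤ b) (hp : -1 < p)
    (hf : ContinuousOn f (Ioc 0 b)) (hle : ∀ s ∈ Ioc 0 b, ‖f s‖ ≤ M * s ^ p) :
    IntegrableOn f (Ioc 0 b) :=
  (((intervalIntegrable_iff_integrableOn_Ioc_of_le hb).1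
    (intervalIntegral.intervalIntegrable_rpow' hp)).const_mul M).mono'
    (hf.aestronglyMeasurable measurableSet_Ioc)
    ((ae_restrict_iff' measurableSet_Ioc).2 (ae_of_all _ hle))

section

variable {φ : ℝ → ℝ}

lemma integrableOn_Ioc_div_of_pos (hpos : ∀ r, 0 < r → 0 < φ r)
    (hcont : ContinuousOn φ (Ioi 0)) {a b : ℝ} (ha : 0 < a) :
    IntegrableOn (fun s => s / φ s) (Ioc a b) := by
  have hsub : Icc a b ⊆ Ioi 0 := fun x hx => ha.trans_le hx.1
  exact ((continuousOn_id.div hcont fun x hx => (hpos x hx).ne').mono hsub).integrableOn_Icc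
    |>.mono_set Ioc_subset_Icc_self

lemma integrableOn_Ioc_zero_div (hpos : ∀ r, 0 < r → 0 < φ r)
    (hcont : ContinuousOn φ (Ioi 0)) {c' β₂ : ℝ} (hβ₂ : β₂ < 2)
    (hscale : ∀ s, 0 < s → s ≤ 1 → φ 1 / φ s ≤ c' * (1 / s) ^ β₂) (r : ℝ) :
    IntegrableOn (fun s => s / φ s) (Ioc 0 r) := by
  have h1 : IntegrableOn (fun s => s / φ s) (Ioc 0 1) := by
    refine integrableOn_Ioc_zero_of_norm_le_rpow zero_le_one (p := 1 - β₂) (M := c' / φ 1)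
      (by linarith) ((continuousOn_id.div hcont fun x hx => (hpos x hx).ne').mono
        fun x hx => hx.1) fun s ⟨hs, hs1⟩ => ?_
    have hφ1 := hpos 1 one_pos
    have hφs := hpos s hs
    rw [Real.norm_of_nonneg (div_nonneg hs.le hφs.le), rpow_sub hs, rpow_one]
    have key := hscale s hs hs1
    rw [one_div, inv_rpow hs.le, div_le_iff₀ hφs] at key
    rw [div_le_iff₀ hφs]
    calc s = s / φ 1 * φ 1 := by field_simp
      _ ≤ s / φ 1 * (c' * (s ^ β₂)⁻¹ * φ s) := by gcongr
      _ = c' / φ 1 * (s / s ^ β₂) * φ s := by ring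
  rcases le_or_gt r 1 with hr1 | hr1
  · exact h1.mono_set (Ioc_subset_Ioc le_rfl hr1)
  · rw [← Ioc_union_Ioc_eq_Ioc zero_le_one hr1.le]
    exact h1.union (integrableOn_Ioc_div_of_pos hpos hcont one_pos)

lemma cumIntegral_eq_add (hint : ∀ r, IntegrableOn (fun s => s / φ s) (Ioc 0 r))
    {r R : ℝ} (hr : 0 < r) (hrR : r ≤ R) :
    cumIntegral φ R = cumIntegral φ r + ∫ s in Ioc r R, s / φ s := by
  have hR := hint R
  rw [cumIntegral, cumIntegral, ← Ioc_union_Ioc_eq_Ioc hr.le hrR]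
  exact setIntegral_union (Ioc_disjoint_Ioc_of_le le_rfl) measurableSet_Ioc
    (hR.mono_set (Ioc_subset_Ioc le_rfl hrR)) (hR.mono_set (Ioc_subset_Ioc hr.le le_rfl))

lemma sq_div_le_cumIntegral (hpos : ∀ r, 0 < r → 0 < φ r) (hmono : StrictMonoOn φ (Ioi 0))
    (hint : ∀ r, IntegrableOn (fun s => s / φ s) (Ioc 0 r)) {r : ℝ} (hr : 0 < r) :
    r ^ 2 / (2 * φ r) ≤ cumIntegral φ r := by
  have hid : IntegrableOn (fun s : ℝ => s / φ r) (Ioc 0 r) :=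
    ((intervalIntegrable_iff_integrableOn_Ioc_of_le hr.le).1
      intervalIntegral.intervalIntegrable_id).div_const _
  calc r ^ 2 / (2 * φ r) = ∫ s in Ioc 0 r, s / φ r := by
        rw [integral_div, ← intervalIntegral.integral_of_le hr.le, integral_id]; ring
    _ ≤ cumIntegral φ r := setIntegral_mono_on hid (hint r) measurableSet_Ioc
        fun s ⟨hs, hsr⟩ => div_le_div_of_nonneg_left hs.le (hpos s hs)
          (hmono.monotoneOn hs hr hsr)

lemma cumIntegral_pos (hpos : ∀ r, 0 < r → 0 < φ r) (hmono : StrictMonoOn φ (Ioi 0))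
    (hint : ∀ r, IntegrableOn (fun s => s / φ s) (Ioc 0 r)) {r : ℝ} (hr : 0 < r) :
    0 < cumIntegral φ r :=
  lt_of_lt_of_le (by have := hpos r hr; positivity) (sq_div_le_cumIntegral hpos hmono hint hr)

lemma cumIntegral_mono (hpos : ∀ r, 0 < r → 0 < φ r)
    (hint : ∀ r, IntegrableOn (fun s => s / φ s) (Ioc 0 r))
    {r R : ℝ} (hr : 0 < r) (hrR : r ≤ R) : cumIntegral φ r ≤ cumIntegral φ R := by
  rw [cumIntegral_eq_add hint hr hrR, le_add_iff_nonneg_right]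
  exact setIntegral_nonneg measurableSet_Ioc fun s hs =>
    div_nonneg (hr.trans hs.1).le (hpos s (hr.trans hs.1)).le

lemma div_le_rpow_of_lower_scaling {C β r s : ℝ} (hC : 0 < C) (hr : 0 < r) (hs : 0 < s)
    (hφr : 0 < φ r) (hscale : C * (s / r) ^ β ≤ φ s / φ r) :
    s / φ s ≤ r ^ β / (C * φ r) * s ^ (1 - β) := by
  have hden : 0 < C * φ r * (s / r) ^ β := by positivity
  have hle : C * φ r * (s / r) ^ β ≤ φ s := by
    rw [le_div_iff₀ hφr] at hscale; linarith
  calc s / φ s ≤ s / (C * φ r * (s / r) ^ β) := div_le_div_of_nonneg_left hs.le hden hle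
    _ = r ^ β / (C * φ r) * s ^ (1 - β) := by
        have := rpow_pos_of_pos hs β
        have := rpow_pos_of_pos hr β
        rw [div_rpow hs.le hr.le, rpow_sub hs, rpow_one]
        field_simp

lemma integral_Ioc_div_le_of_lower_scaling (hpos : ∀ r, 0 < r → 0 < φ r)
    (hint : ∀ r, IntegrableOn (fun s => s / φ s) (Ioc 0 r))
    {C β r R : ℝ} (hC : 0 < C) (hβ : β < 2)
    (hscale : ∀ s ∈ Ioc r R, C * (s / r) ^ β ≤ φ s / φ r) (hr : 0 < r) (hrR : r ≤ R) :
    ∫ s in Ioc r R, s / φ s ≤ 2 / (C * (2 - β)) * (R / r) ^ (2 - β) * (r ^ 2 / (2 * φ r)) := by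
  have hR : 0 < R := hr.trans_le hrR
  have hφr := hpos r hr
  have hgint : IntegrableOn (fun s : ℝ => r ^ β / (C * φ r) * s ^ (1 - β)) (Ioc r R) :=
    ((intervalIntegrable_iff_integrableOn_Ioc_of_le hrR).1
      (intervalIntegral.intervalIntegrable_rpow' (by linarith))).const_mul _
  have hrpow : (R / r) ^ (2 - β) * r ^ 2 = r ^ β * R ^ (2 - β) := by
    have hsq : r ^ 2 = r ^ β * r ^ (2 - β) := by rw [← rpow_add hr, add_sub_cancel, rpow_two]
    have := rpow_pos_of_pos hr (2 - β)
    rw [div_rpow hR.le hr.le, hsq]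
    field_simp
  calc ∫ s in Ioc r R, s / φ s
      ≤ ∫ s in Ioc r R, r ^ β / (C * φ r) * s ^ (1 - β) :=
        setIntegral_mono_on ((hint R).mono_set (Ioc_subset_Ioc hr.le le_rfl)) hgint
          measurableSet_Ioc fun s hs => div_le_rpow_of_lower_scaling hC hr (hr.trans hs.1) hφr
            (hscale s hs)
    _ = r ^ β / (C * φ r) * ((R ^ (2 - β) - r ^ (2 - β)) / (2 - β)) := by
        rw [integral_const_mul, ← intervalIntegral.integral_of_le hrR,
          integral_rpow (Or.inl (by linarith)), show 1 - β + 1 = 2 - β by ring]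
    _ ≤ r ^ β / (C * φ r) * (R ^ (2 - β) / (2 - β)) := by
        have := rpow_pos_of_pos hr (2 - β)
        gcongr
        linarith
    _ = 2 / (C * (2 - β)) * (R / r) ^ (2 - β) * (r ^ 2 / (2 * φ r)) := by
        have : 2 - β ≠ 0 := by linarith
        rw [mul_assoc (2 / _), ← mul_div_assoc ((R / r) ^ (2 - β)), hrpow]
        field_simp

lemma cumIntegral_le_of_lower_scaling (hpos : ∀ r, 0 < r → 0 < φ r)
    (hmono : StrictMonoOn φ (Ioi 0))
    (hint : ∀ r, IntegrableOn (fun s => s / φ s) (Ioc 0 r))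
    {C β r R : ℝ} (hC : 0 < C) (hβ : β < 2)
    (hscale : ∀ s ∈ Ioc r R, C * (s / r) ^ β ≤ φ s / φ r) (hr : 0 < r) (hrR : r ≤ R) :
    cumIntegral φ R ≤ (1 + 2 / (C * (2 - β))) * (R / r) ^ (2 - β) * cumIntegral φ r := by
  have hIr := sq_div_le_cumIntegral hpos hmono hint hr
  have hmid := integral_Ioc_div_le_of_lower_scaling hpos hint hC hβ hscale hr hrR
  have hx : 1 ≤ (R / r) ^ (2 - β) := one_le_rpow ((one_le_div hr).2 hrR) (by linarith)
  have hk : 0 ≤ 2 / (C * (2 - β)) := div_nonneg zero_le_two (mul_pos hC (by linarith)).le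
  have hI0 : 0 ≤ cumIntegral φ r := (lt_of_lt_of_le (by have := hpos r hr; positivity) hIr).le
  rw [cumIntegral_eq_add hint hr hrR]
  nlinarith [mul_le_mul_of_nonneg_left hIr (mul_nonneg hk (zero_le_one.trans hx))]

end

lemma max_one_div_max_one_le {r R : ℝ} (hr : 0 < r) (hrR : r ≤ R) :
    max R 1 / max r 1 ≤ R / r := by
  rw [div_le_div_iff₀ (hr.trans_le (le_max_left r 1)) hr, max_mul_of_nonneg _ _ hr.le,
    mul_max_of_nonneg _ _ (hr.trans_le hrR).le]
  exact max_le_max le_rfl (by linarith)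

lemma scaling_sq_div_comp_max_one {I : ℝ → ℝ} {K β r R : ℝ} (hK : 0 < K) (hβ : β ≤ 2)
    (hpos : ∀ u, 1 ≤ u → 0 < I u) (hmono : ∀ u v, 1 ≤ u → u ≤ v → I u ≤ I v)
    (hgrowth : ∀ u v, 1 ≤ u → u ≤ v → I v ≤ K * (v / u) ^ (2 - β) * I u)
    (hr : 0 < r) (hrR : r ≤ R) :
    K⁻¹ * (R / r) ^ β ≤ R ^ 2 / I (max R 1) / (r ^ 2 / I (max r 1)) ∧
      R ^ 2 / I (max R 1) / (r ^ 2 / I (max r 1)) ≤ (R / r) ^ 2 := by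
  set u := max r 1
  set v := max R 1
  have hR : 0 < R := hr.trans_le hrR
  have hu : 1 ≤ u := le_max_right r 1
  have huv : u ≤ v := max_le_max hrR le_rfl
  have hIu := hpos u hu
  have hIv := hpos v (hu.trans huv)
  have hx : 0 < R / r := div_pos hR hr
  have hxβ : (R / r) ^ β * (R / r) ^ (2 - β) = (R / r) ^ 2 := by
    rw [← rpow_add hx, add_sub_cancel, rpow_two]
  have hgrowth' : I v ≤ K * (R / r) ^ (2 - β) * I u :=
    (hgrowth u v hu huv).trans (mul_le_mul_of_nonneg_right (mul_le_mul_of_nonneg_left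
      (rpow_le_rpow (by positivity) (max_one_div_max_one_le hr hrR) (by linarith)) hK.le) hIu.le)
  have hratio : R ^ 2 / I v / (r ^ 2 / I u) = (R / r) ^ 2 * (I u / I v) := by
    field_simp
  rw [hratio]
  constructor
  · calc K⁻¹ * (R / r) ^ β = (R / r) ^ β * (K⁻¹ * I v / I v) := by field_simp
      _ ≤ (R / r) ^ β * (K⁻¹ * (K * (R / r) ^ (2 - β) * I u) / I v) := by gcongr
      _ = (R / r) ^ 2 * (I u / I v) := by rw [← hxβ]; field_simp
  · exact mul_le_of_le_one_right (by positivity) ((div_le_one hIv).2 (hmono u v hu huv))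

theorem stmt_4_general (φj : ℝ → ℝ) (hφjpos : ∀ r : ℝ, 0 < r → 0 < φj r)
    (hφjmono : StrictMonoOn φj (Ioi 0)) (hφjcont : ContinuousOn φj (Ioi 0))
    (c c' β₁ β₂ : ℝ) (hβ₂ : β₂ < 2)
    (hscale₁ : ∀ r R : ℝ, 0 < r → r ≤ R → R ≤ 1 →
      c * (R / r) ^ β₁ ≤ φj R / φj r ∧ φj R / φj r ≤ c' * (R / r) ^ β₂)
    (C C' β₁' β₂' : ℝ) (hC : 0 < C) (hβ₁' : 1 < β₁')
    (hscale₂ : ∀ r R : ℝ, 1 ≤ r → r ≤ R →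
      C * (R / r) ^ β₁' ≤ φj R / φj r ∧ φj R / φj r ≤ C' * (R / r) ^ β₂')
    (Φ : ℝ → ℝ)
    (hΦ : ∀ r : ℝ, 0 < r → Φ r = r ^ 2 / (2 * ∫ s in Ioc (0 : ℝ) r, s / φj s))
    (φc : ℝ → ℝ)
    (hφc₁ : ∀ r : ℝ, 0 < r → r ≤ 1 → φc r = r ^ 2)
    (hφc₂ : ∀ r : ℝ, 1 ≤ r → φc r = Φ r / Φ 1) :
    ∃ c₀ β : ℝ, 0 < c₀ ∧ 1 < β ∧ β ≤ 2 ∧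
      ∀ r R : ℝ, 0 < r → r ≤ R →
        c₀ * (R / r) ^ β ≤ φc R / φc r ∧ φc R / φc r ≤ (R / r) ^ 2 := by
  set β := min β₁' (3 / 2)
  have hβ : β < 2 := (min_le_right _ _).trans_lt (by norm_num)
  have hint := integrableOn_Ioc_zero_div hφjpos hφjcont hβ₂
    (fun s hs hs1 => (hscale₁ s 1 hs hs1 le_rfl).2)
  have hlower : ∀ r R, 1 ≤ r → ∀ s ∈ Ioc r R, C * (s / r) ^ β ≤ φj s / φj r := fun r R hr s hs =>
    le_trans (by gcongr; exacts [(one_le_div (by linarith)).2 hs.1.le, min_le_left _ _])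
      (hscale₂ r s hr hs.1.le).1
  set I := cumIntegral φj
  have hIpos : ∀ u, 0 < u → 0 < I u := fun u => cumIntegral_pos hφjpos hφjmono hint
  have hφc : ∀ r, 0 < r → φc r = I 1 * (r ^ 2 / I (max r 1)) := by
    intro r hr
    have hΦ' : ∀ r, 0 < r → Φ r = r ^ 2 / (2 * I r) := hΦ
    have := hIpos 1 one_pos
    rcases le_total r 1 with hr1 | hr1
    · rw [hφc₁ r hr hr1, max_eq_right hr1]; field_simp
    · have := hIpos r hr
      rw [hφc₂ r hr1, max_eq_left hr1, hΦ' r hr, hΦ' 1 one_pos]; field_simp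
  set K := 1 + 2 / (C * (2 - β))
  have hK : 0 < K := by
    have : 0 < 2 - β := by linarith
    positivity
  refine ⟨K⁻¹, β, inv_pos.2 hK, lt_min hβ₁' (by norm_num), hβ.le, fun r R hr hrR => ?_⟩
  rw [hφc r hr, hφc R (hr.trans_le hrR), mul_div_mul_left _ _ (hIpos 1 one_pos).ne']
  exact scaling_sq_div_comp_max_one hK hβ.le (fun u hu => hIpos u (by linarith))
    (fun u v hu huv => cumIntegral_mono hφjpos hint (by linarith) huv)
    (fun u v hu huv => cumIntegral_le_of_lower_scaling hφjpos hφjmono hint hC hβ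
      (hlower u v hu) (by linarith) huv) hr hrR

/-- the function `φ_c` built from `Φ(r) = r²/(2∫₀^r s/φ_j(s) ds)` has
global two-sided scaling with lower index `β ∈ (1,2]` and upper index `2`. -/
theorem stmt_4 (φj : ℝ → ℝ) (hφjpos : ∀ r : ℝ, 0 < r → 0 < φj r)
    (hφjmono : StrictMonoOn φj (Ioi 0)) (hφjcont : ContinuousOn φj (Ioi 0))
    (hφjone : φj 1 = 1)
    (c c' β₁ β₂ : ℝ) (hc : 0 < c) (hc' : 0 < c')
    (hβ₁ : 0 < β₁) (hβ₁₂ : β₁ ≤ β₂) (hβ₂ : β₂ < 2)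
    (hscale₁ : ∀ r R : ℝ, 0 < r → r ≤ R → R ≤ 1 →
      c * (R / r) ^ β₁ ≤ φj R / φj r ∧ φj R / φj r ≤ c' * (R / r) ^ β₂)
    (C C' β₁' β₂' : ℝ) (hC : 0 < C) (hC' : 0 < C') (hβ₁' : 1 < β₁') (hβ₁₂' : β₁' ≤ β₂')
    (hscale₂ : ∀ r R : ℝ, 1 ≤ r → r ≤ R →
      C * (R / r) ^ β₁' ≤ φj R / φj r ∧ φj R / φj r ≤ C' * (R / r) ^ β₂')
    (Φ : ℝ → ℝ)
    (hΦ : ∀ r : ℝ, 0 < r → Φ r = r ^ 2 / (2 * ∫ s in Ioc (0 : ℝ) r, s / φj s))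
    (φc : ℝ → ℝ)
    (hφc₁ : ∀ r : ℝ, 0 < r → r ≤ 1 → φc r = r ^ 2)
    (hφc₂ : ∀ r : ℝ, 1 ≤ r → φc r = Φ r / Φ 1) :
    ∃ c₀ β : ℝ, 0 < c₀ ∧ 1 < β ∧ β ≤ 2 ∧
      ∀ r R : ℝ, 0 < r → r ≤ R →
        c₀ * (R / r) ^ β ≤ φc R / φc r ∧ φc R / φc r ≤ (R / r) ^ 2 :=
  stmt_4_general φj hφjpos hφjmono hφjcont c c' β₁ β₂ hβ₂ hscale₁ C C' β₁' β₂' hC hβ₁' hscale₂ Φ hΦ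
    φc hφc₁ hφc₂
end

section
/- Let (M,d) be a metric space and μ a Borel measure on M such that V(x,r) := μ(B(x,r)) is finite and strictly positive for all x ∈ M and r > 0, and suppose there exist constants C_μ > 0 and d₂ > 0 such that V(x,R)/V(x,r) ≤ C_μ (R/r)^{d₂} for all x ∈ M and 0 < r ≤ R. Let φ : (0,∞) → (0,∞) be nondecreasing and suppose there exist constants c₁ > 0 and β₁ > 0 with φ(R)/φ(r) ≥ c₁ (R/r)^{β₁} for all 0 < r ≤ R. Let J : M × M → [0,∞) be measurable with J(x,y) ≤ C₀ / (V(x, d(x,y)) · φ(d(x,y))) for all x ≠ y, for some constant C₀ > 0. Then there exists a constant c > 0 such that for every x ∈ M and r > 0, ∫_{M ∖ B(x,r)} J(x,y) dμ(y) ≤ c / φ(r). -/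
open MeasureTheory Set Real Metric
open scoped ENNReal

/-!
Cut `(B(x,r))ᶜ` into the dyadic annuli `B(x,2ⁿ⁺¹r) ∖ B(x,2ⁿr)`. On the `n`-th annulus the kernel
is at most `C₀ / (V(x,2ⁿr) φ(2ⁿr))`, and the annulus has mass at most
`V(x,2ⁿ⁺¹r) ≤ Cμ 2^d₂ V(x,2ⁿr)`, so it contributes at most
`C₀ Cμ 2^d₂ / φ(2ⁿr) ≤ C₀ Cμ 2^d₂ (2^-β₁)ⁿ / (c₁ φ(r))` by the lower scaling of `φ`.
Summing the geometric series gives `c / φ(r)` with `c = C₀ Cμ 2^d₂ / (c₁ (1 - 2^-β₁))`.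
-/

section DyadicAnnuli

variable {M : Type*} [PseudoMetricSpace M]

lemma compl_ball_subset_iUnion_dyadic_annuli (x : M) {r : ℝ} (hr : 0 < r) :
    (ball x r)ᶜ ⊆ ⋃ n : ℕ, ball x (2 ^ (n + 1) * r) \ ball x (2 ^ n * r) := by
  intro y hy
  rw [mem_compl_iff, mem_ball, not_lt] at hy
  obtain ⟨n, hn, hn'⟩ := exists_nat_pow_near ((one_le_div hr).2 hy) one_lt_two
  rw [le_div_iff₀ hr] at hn
  rw [div_lt_iff₀ hr] at hn'
  simp only [mem_iUnion, mem_sdiff, mem_ball, not_lt]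
  exact ⟨n, hn', hn⟩

variable [MeasurableSpace M]

lemma lintegral_compl_ball_le_tsum_dyadic (μ : Measure M) (f : M → ℝ≥0∞) (x : M) {r : ℝ}
    (hr : 0 < r) (K : ℕ → ℝ≥0∞) (hK : ∀ n y, 2 ^ n * r ≤ dist y x → f y ≤ K n) :
    ∫⁻ y in (ball x r)ᶜ, f y ∂μ ≤ ∑' n : ℕ, K n * μ (ball x (2 ^ (n + 1) * r)) :=
  calc ∫⁻ y in (ball x r)ᶜ, f y ∂μ
      ≤ ∫⁻ y in ⋃ n : ℕ, ball x (2 ^ (n + 1) * r) \ ball x (2 ^ n * r), f y ∂μ :=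
        lintegral_mono_set (compl_ball_subset_iUnion_dyadic_annuli x hr)
    _ ≤ ∑' n : ℕ, ∫⁻ y in ball x (2 ^ (n + 1) * r) \ ball x (2 ^ n * r), f y ∂μ :=
        lintegral_iUnion_le _ _
    _ ≤ ∑' n : ℕ, ∫⁻ _ in ball x (2 ^ (n + 1) * r), K n ∂μ := by
        refine ENNReal.tsum_le_tsum fun n => ?_
        refine (setLIntegral_mono measurable_const fun y hy => hK n y ?_).trans
          (lintegral_mono_set sdiff_subset)
        simpa only [mem_ball, not_lt] using hy.2
    _ = ∑' n : ℕ, K n * μ (ball x (2 ^ (n + 1) * r)) := by simp only [setLIntegral_const]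

end DyadicAnnuli

section VolumeDoubling

variable {M : Type*} [PseudoMetricSpace M] [MeasurableSpace M] {μ : Measure M}
  {φ : ℝ → ℝ} {C₀ : ℝ}

lemma kernel_le_of_le_dist {J : M → M → ℝ} (hC₀ : 0 ≤ C₀)
    (hfin : ∀ (x : M) (r : ℝ), 0 < r → μ (ball x r) < ⊤)
    (hpos : ∀ (x : M) (r : ℝ), 0 < r → 0 < μ (ball x r))
    (hφmono : ∀ r R : ℝ, 0 < r → r ≤ R → φ r ≤ φ R) (hφpos : ∀ r : ℝ, 0 < r → 0 < φ r)
    (hJ : ∀ x y : M, x ≠ y → J x y ≤ C₀ / ((μ (ball x (dist x y))).toReal * φ (dist x y)))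
    {x y : M} {s : ℝ} (hs : 0 < s) (hsy : s ≤ dist x y) :
    J x y ≤ C₀ / ((μ (ball x s)).toReal * φ s) := by
  have hxy : x ≠ y := fun h => by rw [h, dist_self] at hsy; linarith
  have hVs : 0 < (μ (ball x s)).toReal := ENNReal.toReal_pos (hpos x s hs).ne' (hfin x s hs).ne
  have hφs := hφpos s hs
  refine (hJ x y hxy).trans ?_
  gcongr
  · exact (hfin x _ (hs.trans_le hsy)).ne
  · exact hφmono s _ hs hsy

lemma dyadic_annulus_term_le {Cμ d₂ c₁ β₁ : ℝ} (hC₀ : 0 ≤ C₀) (hCμ : 0 ≤ Cμ) (hc₁ : 0 < c₁)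
    (hfin : ∀ (x : M) (r : ℝ), 0 < r → μ (ball x r) < ⊤)
    (hpos : ∀ (x : M) (r : ℝ), 0 < r → 0 < μ (ball x r))
    (hVD : ∀ (x : M) (r R : ℝ), 0 < r → r ≤ R →
      (μ (ball x R)).toReal / (μ (ball x r)).toReal ≤ Cμ * (R / r) ^ d₂)
    (hφpos : ∀ r : ℝ, 0 < r → 0 < φ r)
    (hφscale : ∀ r R : ℝ, 0 < r → r ≤ R → c₁ * (R / r) ^ β₁ ≤ φ R / φ r)
    (x : M) {r : ℝ} (hr : 0 < r) (n : ℕ) :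
    ENNReal.ofReal (C₀ / ((μ (ball x (2 ^ n * r))).toReal * φ (2 ^ n * r))) *
        μ (ball x (2 ^ (n + 1) * r)) ≤
      ENNReal.ofReal (C₀ * Cμ * 2 ^ d₂ / (c₁ * φ r) * (2 ^ (-β₁)) ^ n) := by
  set s : ℝ := 2 ^ n * r with hs_def
  have hs : 0 < s := by positivity
  have hrs : r ≤ s := le_mul_of_one_le_left hr.le (one_le_pow₀ one_le_two)
  have hVs : 0 < (μ (ball x s)).toReal := ENNReal.toReal_pos (hpos x s hs).ne' (hfin x s hs).ne
  have hφs := hφpos s hs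
  have hφr := hφpos r hr
  have hdouble : (μ (ball x (2 * s))).toReal ≤ Cμ * 2 ^ d₂ * (μ (ball x s)).toReal := by
    have := hVD x s (2 * s) hs (by linarith)
    rwa [mul_div_cancel_right₀ _ hs.ne', div_le_iff₀ hVs] at this
  have hgrowth : c₁ * (2 ^ β₁) ^ n * φ r ≤ φ s := by
    have := hφscale r s hr hrs
    rwa [hs_def, mul_div_cancel_right₀ _ hr.ne', ← rpow_pow_comm zero_le_two,
      le_div_iff₀ hφr] at this
  rw [pow_succ', mul_assoc, ← hs_def, ← ENNReal.ofReal_toReal (hfin x (2 * s) (by positivity)).ne,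
    ← ENNReal.ofReal_mul (by positivity)]
  refine ENNReal.ofReal_le_ofReal ?_
  calc C₀ / ((μ (ball x s)).toReal * φ s) * (μ (ball x (2 * s))).toReal
      ≤ C₀ / ((μ (ball x s)).toReal * φ s) * (Cμ * 2 ^ d₂ * (μ (ball x s)).toReal) := by
        gcongr
    _ = C₀ * Cμ * 2 ^ d₂ / φ s := by field_simp
    _ ≤ C₀ * Cμ * 2 ^ d₂ / (c₁ * (2 ^ β₁) ^ n * φ r) := by gcongr
    _ = C₀ * Cμ * 2 ^ d₂ / (c₁ * φ r) * (2 ^ (-β₁)) ^ n := by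
        rw [rpow_neg zero_le_two, inv_pow]
        field_simp

end VolumeDoubling

theorem stmt_6_general {M : Type*} [MetricSpace M] [MeasurableSpace M]
    (μ : Measure M) (V : M → ℝ → ℝ)
    (hV : ∀ x r, V x r = (μ (ball x r)).toReal)
    (hfin : ∀ (x : M) (r : ℝ), 0 < r → μ (ball x r) < ⊤)
    (hpos : ∀ (x : M) (r : ℝ), 0 < r → 0 < μ (ball x r))
    (Cμ d₂ : ℝ) (hCμ : 0 < Cμ)
    (hVD : ∀ (x : M) (r R : ℝ), 0 < r → r ≤ R → V x R / V x r ≤ Cμ * (R / r) ^ d₂)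
    (φ : ℝ → ℝ) (hφpos : ∀ r : ℝ, 0 < r → 0 < φ r)
    (hφmono : ∀ r R : ℝ, 0 < r → r ≤ R → φ r ≤ φ R)
    (c₁ β₁ : ℝ) (hc₁ : 0 < c₁) (hβ₁ : 0 < β₁)
    (hφscale : ∀ r R : ℝ, 0 < r → r ≤ R → c₁ * (R / r) ^ β₁ ≤ φ R / φ r)
    (J : M → M → ℝ) (hJmeas : Measurable (Function.uncurry J))
    (hJnonneg : ∀ x y, 0 ≤ J x y)
    (C₀ : ℝ) (hC₀ : 0 < C₀)
    (hJ : ∀ x y : M, x ≠ y → J x y ≤ C₀ / (V x (dist x y) * φ (dist x y))) :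
    ∃ c : ℝ, 0 < c ∧ ∀ (x : M) (r : ℝ), 0 < r →
      (∫ y in (ball x r)ᶜ, J x y ∂μ) ≤ c / φ r := by
  obtain rfl : V = fun x r => (μ (ball x r)).toReal := funext fun x => funext (hV x)
  set q : ℝ := 2 ^ (-β₁)
  have hq0 : 0 ≤ q := by positivity
  have hq1 : q < 1 := rpow_lt_one_of_one_lt_of_neg one_lt_two (neg_neg_of_pos hβ₁)
  have h1q : 0 < 1 - q := sub_pos.2 hq1
  refine ⟨C₀ * Cμ * 2 ^ d₂ / c₁ * (1 - q)⁻¹, by positivity, fun x r hr => ?_⟩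
  have hφr := hφpos r hr
  have hdyadic : ∫⁻ y in (ball x r)ᶜ, ENNReal.ofReal (J x y) ∂μ ≤
      ∑' n : ℕ, ENNReal.ofReal (C₀ * Cμ * 2 ^ d₂ / (c₁ * φ r) * q ^ n) :=
    (lintegral_compl_ball_le_tsum_dyadic μ _ x hr _ fun n y hy => ENNReal.ofReal_le_ofReal
      (kernel_le_of_le_dist hC₀.le hfin hpos hφmono hφpos hJ (by positivity)
        (dist_comm y x ▸ hy))).trans
    (ENNReal.tsum_le_tsum
      (dyadic_annulus_term_le hC₀.le hCμ.le hc₁ hfin hpos hVD hφpos hφscale x hr))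
  have hgeom : ∑' n : ℕ, ENNReal.ofReal (C₀ * Cμ * 2 ^ d₂ / (c₁ * φ r) * q ^ n) =
      ENNReal.ofReal (C₀ * Cμ * 2 ^ d₂ / c₁ * (1 - q)⁻¹ / φ r) := by
    rw [← ENNReal.ofReal_tsum_of_nonneg (fun n => by positivity)
        ((summable_geometric_of_lt_one hq0 hq1).mul_left _),
      tsum_mul_left, tsum_geometric_of_lt_one hq0 hq1]
    congr 1
    ring
  rw [integral_eq_lintegral_of_nonneg_ae (.of_forall (hJnonneg x))
    hJmeas.of_uncurry_left.aestronglyMeasurable]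
  exact ENNReal.toReal_le_of_le_ofReal (by positivity) (hdyadic.trans_eq hgeom)

/-- under volume doubling, a jumping kernel bounded above by
`C₀/(V(x,d(x,y)) φ(d(x,y)))` has tails `∫_{B(x,r)ᶜ} J(x,·) dμ ≤ c/φ(r)`. -/
theorem stmt_6 {M : Type*} [MetricSpace M] [MeasurableSpace M] [BorelSpace M]
    (μ : Measure M) (V : M → ℝ → ℝ)
    (hV : ∀ x r, V x r = (μ (ball x r)).toReal)
    (hfin : ∀ (x : M) (r : ℝ), 0 < r → μ (ball x r) < ⊤)
    (hpos : ∀ (x : M) (r : ℝ), 0 < r → 0 < μ (ball x r))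
    (Cμ d₂ : ℝ) (hCμ : 0 < Cμ) (hd₂ : 0 < d₂)
    (hVD : ∀ (x : M) (r R : ℝ), 0 < r → r ≤ R → V x R / V x r ≤ Cμ * (R / r) ^ d₂)
    (φ : ℝ → ℝ) (hφpos : ∀ r : ℝ, 0 < r → 0 < φ r)
    (hφmono : ∀ r R : ℝ, 0 < r → r ≤ R → φ r ≤ φ R)
    (c₁ β₁ : ℝ) (hc₁ : 0 < c₁) (hβ₁ : 0 < β₁)
    (hφscale : ∀ r R : ℝ, 0 < r → r ≤ R → c₁ * (R / r) ^ β₁ ≤ φ R / φ r)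
    (J : M → M → ℝ) (hJmeas : Measurable (Function.uncurry J))
    (hJnonneg : ∀ x y, 0 ≤ J x y)
    (C₀ : ℝ) (hC₀ : 0 < C₀)
    (hJ : ∀ x y : M, x ≠ y → J x y ≤ C₀ / (V x (dist x y) * φ (dist x y))) :
    ∃ c : ℝ, 0 < c ∧ ∀ (x : M) (r : ℝ), 0 < r →
      (∫ y in (ball x r)ᶜ, J x y ∂μ) ≤ c / φ r :=
  stmt_6_general μ V hV hfin hpos Cμ d₂ hCμ hVD φ hφpos hφmono c₁ β₁ hc₁ hβ₁ hφscale J hJmeas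
    hJnonneg C₀ hC₀ hJ
end

section
/- Let (M,d) be a metric space and μ a Borel measure on M such that V(x,r) := μ(B(x,r)) is finite and strictly positive for all x ∈ M and r > 0, and suppose there exist constants C_μ > 0 and d₂ > 0 such that V(x,R)/V(x,r) ≤ C_μ (R/r)^{d₂} for all x ∈ M and 0 < r ≤ R. Let φ_c : [0,∞) → [0,∞) be a strictly increasing continuous bijection satisfying c₁ (R/r)^{β₁} ≤ φ_c(R)/φ_c(r) ≤ c₂ (R/r)^{β₂} for all 0 < r ≤ R, with constants c₁, c₂ > 0 and 1 < β₁ ≤ β₂. Let ψ : [0,∞) → [0,∞) be a strictly increasing bijection with a^{-1} φ_c(r)/r ≤ ψ(r) ≤ a φ_c(r)/r for all r > 0, for some a ≥ 1. Let φ_j : (0,∞) → (0,∞) be nondecreasing with φ_j(R)/φ_j(r) ≥ c₃ (R/r)^{β₁'} for all 0 < r ≤ R, for some c₃, β₁' > 0. Fix t > 0 and suppose p : M × M → [0,∞) is measurable and satisfies, for all x ≠ y, p(x,y) ≤ A [ (1/V(x, φ_c^{-1}(t))) exp(- b d(x,y)/ψ^{-1}(t/d(x,y))) + t / (V(x, d(x,y))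 φ_j(d(x,y))) ] for some constants A, b > 0. Then there exists a constant c > 0, depending only on the constants above (and not on t, r, x), such that for every r > 0 with φ_c(r) ≥ t and every x ∈ M, ∫_{M ∖ B(x,r)} p(x,y) dμ(y) ≤ c · t · (1/φ_c(r) + 1/φ_j(r)). -/
open MeasureTheory Set Real Metric
open scoped ENNReal

/-!
Cut `(B(x,r))ᶜ` into the dyadic annuli `2ᵏr ≤ d(x,y) < 2ᵏ⁺¹r`. On the `k`-th annulus the kernel
bound is at most its value at `s = 2ᵏr`, and the annulus has measure at most `V(x,2s)`.
Volume doubling and the lower scaling of `φ_j` make the jump part at most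
`C 2^{-kβ₁'} t / φ_j(r)`. For the sub-Gaussian part, the scaling of `φ_c` and the comparison
`ψ(u) ≍ φ_c(u)/u` give `s / ψ⁻¹(t/s) ≥ κ (φ_c(s)/t)^{1/(β₂-1)}`, so the exponential decays faster
than any power of `φ_c(s)/t ≥ c₁ (s/ρ)^{β₁}`, `ρ = φ_c⁻¹(t)`; this absorbs the volume growth
`V(x,2s)/V(x,ρ) ≲ (s/ρ)^{d₂}` and leaves `C 2^{-k} t / φ_c(r)`. Two geometric series remain.
-/

theorem exp_neg_le_div_rpow {p z : ℝ} (hp : 0 < p) (hz : 0 < z) :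
    exp (-z) ≤ (p / z) ^ p := by
  have key : (z / p) ^ p ≤ exp z := calc
    (z / p) ^ p ≤ exp (z / p) ^ p := by gcongr; linarith [add_one_le_exp (z / p)]
    _ = exp z := by rw [← exp_mul, div_mul_cancel₀ _ hp.ne']
  rw [exp_neg, ← inv_div, inv_rpow (by positivity)]
  exact inv_anti₀ (by positivity) key

theorem exp_neg_mul_rpow_le {b κ γ q Y : ℝ} (hb : 0 < b) (hκ : 0 < κ) (hγ : 0 < γ)
    (hq : 0 < q) (hY : 0 < Y) :
    exp (-(b * κ * Y ^ γ)) ≤ (q / γ / (b * κ)) ^ (q / γ) * Y ^ (-q) := by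
  calc exp (-(b * κ * Y ^ γ)) ≤ (q / γ / (b * κ * Y ^ γ)) ^ (q / γ) :=
        exp_neg_le_div_rpow (by positivity) (by positivity)
    _ = (q / γ / (b * κ)) ^ (q / γ) * Y ^ (-q) := by
      rw [← div_div, div_eq_mul_inv _ (Y ^ γ), mul_rpow (by positivity) (by positivity),
        inv_rpow (by positivity), ← rpow_mul hY.le, mul_div_cancel₀ _ hγ.ne', rpow_neg hY.le]

section RightInverse

variable {f g : ℝ → ℝ}

theorem StrictMonoOn.monotoneOn_of_rightInverse (hf : StrictMonoOn f (Ici 0))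
    (hg : ∀ t, 0 ≤ t → 0 ≤ g t) (hfg : ∀ t, 0 ≤ t → f (g t) = t) : MonotoneOn g (Ici 0) :=
  fun s hs t ht hst => (hf.le_iff_le (hg s hs) (hg t ht)).1 (by rwa [hfg s hs, hfg t ht])

theorem pos_of_rightInverse (hf0 : f 0 = 0) (hg : ∀ t, 0 ≤ t → 0 ≤ g t)
    (hfg : ∀ t, 0 ≤ t → f (g t) = t) {t : ℝ} (ht : 0 < t) : 0 < g t := by
  refine (hg t ht.le).lt_of_ne fun h => ht.ne ?_
  rw [← hfg t ht.le, ← h, hf0]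

end RightInverse

theorem le_mul_rpow_of_ratio_le {φ : ℝ → ℝ} {K β a s t u : ℝ} (hK : 0 ≤ K) (hs : 0 < s)
    (ht : 0 < t) (hu : 0 < u) (hφu : 0 < φ u) (hratio : φ s / φ u ≤ K * (s / u) ^ β)
    (hu_div : φ u / u ≤ a * (t / s)) : φ s / t ≤ a * K * (s / u) ^ (β - 1) := by
  rw [div_le_iff₀ ht]
  calc φ s ≤ K * (s / u) ^ β * (a * (t / s) * u) :=
        ((div_le_iff₀ hφu).1 hratio).trans (by gcongr; exact (div_le_iff₀ hu).1 hu_div)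
    _ = a * K * (s / u) ^ (β - 1) * t := by
      rw [rpow_sub_one (by positivity)]; field_simp

theorem inv_rpow_mul_rpow_le_of_le_mul_rpow {X K y β : ℝ} (hX : 0 ≤ X) (hK : 0 < K)
    (hy : 0 < y) (hβ : 1 < β) (h : X ≤ K * y ^ (β - 1)) :
    K⁻¹ ^ (β - 1)⁻¹ * X ^ (β - 1)⁻¹ ≤ y := by
  rw [← mul_rpow (by positivity) hX]
  calc (K⁻¹ * X) ^ (β - 1)⁻¹ ≤ (y ^ (β - 1)) ^ (β - 1)⁻¹ := by
        gcongr; rwa [inv_mul_le_iff₀ hK]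
    _ = y := rpow_rpow_inv hy.le (by linarith)

section Scaling

variable {φ : ℝ → ℝ} {a c₁ c₂ β₁ β₂ : ℝ}

/- Used with `u = ψ⁻¹(t/s)`, for which `φ u / u ≤ a ψ u = a t / s`. The cases `u ≤ s` and
`s ≤ u` use the upper and the lower scaling of `φ` between `u` and `s`. -/
theorem exists_mul_rpow_le_div_of_scaling (ha : 0 < a) (hc₁ : 0 < c₁) (hc₂ : 0 < c₂)
    (hβ₁ : 1 < β₁) (hβ₁₂ : β₁ ≤ β₂) (hφ : ∀ s, 0 < s → 0 < φ s)
    (hscale : ∀ r R : ℝ, 0 < r → r ≤ R →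
      c₁ * (R / r) ^ β₁ ≤ φ R / φ r ∧ φ R / φ r ≤ c₂ * (R / r) ^ β₂) :
    ∃ κ > 0, ∀ s t u : ℝ, 0 < s → 0 < t → 0 < u → t ≤ φ s → φ u / u ≤ a * (t / s) →
      κ * (φ s / t) ^ (β₂ - 1)⁻¹ ≤ s / u := by
  have hβ₂ : 1 < β₂ := hβ₁.trans_le hβ₁₂
  refine ⟨min ((a * c₂)⁻¹ ^ (β₂ - 1)⁻¹) ((a * c₁⁻¹)⁻¹ ^ (β₁ - 1)⁻¹), by positivity, ?_⟩
  intro s t u hs ht hu hts hu_ψ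
  have hX : 1 ≤ φ s / t := (one_le_div ht).2 hts
  rcases le_total u s with hus | hsu
  · have hX_le := le_mul_rpow_of_ratio_le hc₂.le hs ht hu (hφ u hu) (hscale u s hu hus).2 hu_ψ
    calc _ ≤ (a * c₂)⁻¹ ^ (β₂ - 1)⁻¹ * (φ s / t) ^ (β₂ - 1)⁻¹ := by gcongr; exact min_le_left _ _
      _ ≤ s / u := inv_rpow_mul_rpow_le_of_le_mul_rpow (by positivity) (by positivity)
          (by positivity) hβ₂ hX_le
  · have hratio : φ s / φ u ≤ c₁⁻¹ * (s / u) ^ β₁ := by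
      rw [← inv_div (φ u), ← inv_div u, inv_rpow (by positivity), ← mul_inv]
      exact inv_anti₀ (by positivity) (hscale s u hs hsu).1
    have hX_le := le_mul_rpow_of_ratio_le (by positivity) hs ht hu (hφ u hu) hratio hu_ψ
    calc _ ≤ (a * c₁⁻¹)⁻¹ ^ (β₁ - 1)⁻¹ * (φ s / t) ^ (β₁ - 1)⁻¹ := by
          gcongr; exact min_le_right _ _
      _ ≤ s / u := inv_rpow_mul_rpow_le_of_le_mul_rpow (by positivity) (by positivity)
          (by positivity) hβ₁ hX_le

theorem exists_exp_neg_le_mul_rpow {b q : ℝ} (hb : 0 < b) (hq : 0 < q) (ha : 0 < a)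
    (hc₁ : 0 < c₁) (hc₂ : 0 < c₂) (hβ₁ : 1 < β₁) (hβ₁₂ : β₁ ≤ β₂) (hφ : ∀ s, 0 < s → 0 < φ s)
    (hscale : ∀ r R : ℝ, 0 < r → r ≤ R →
      c₁ * (R / r) ^ β₁ ≤ φ R / φ r ∧ φ R / φ r ≤ c₂ * (R / r) ^ β₂) :
    ∃ C > 0, ∀ s t u : ℝ, 0 < s → 0 < t → 0 < u → t ≤ φ s → φ u / u ≤ a * (t / s) →
      exp (-(b * s / u)) ≤ C * (φ s / t) ^ (-q) := by
  obtain ⟨κ, hκ, hexit⟩ := exists_mul_rpow_le_div_of_scaling ha hc₁ hc₂ hβ₁ hβ₁₂ hφ hscale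
  have hγ : 0 < (β₂ - 1)⁻¹ := inv_pos.2 (by linarith)
  refine ⟨(q / (β₂ - 1)⁻¹ / (b * κ)) ^ (q / (β₂ - 1)⁻¹), by positivity,
    fun s t u hs ht hu hts hu_ψ => ?_⟩
  calc exp (-(b * s / u)) ≤ exp (-(b * κ * (φ s / t) ^ (β₂ - 1)⁻¹)) := by
        rw [exp_le_exp, neg_le_neg_iff, mul_assoc, mul_div_assoc]
        exact mul_le_mul_of_nonneg_left (hexit s t u hs ht hu hts hu_ψ) hb.le
    _ ≤ _ := exp_neg_mul_rpow_le hb hκ hγ hq (div_pos (hφ s hs) ht)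

theorem rpow_div_le_mul_div_of_scaling {ρ r s : ℝ} (hβ₂ : 1 ≤ β₂)
    (hρ : 0 < ρ) (hρr : ρ ≤ r) (hrs : r ≤ s) (hφ : ∀ s, 0 < s → 0 < φ s)
    (hscale : φ r / φ ρ ≤ c₂ * (r / ρ) ^ β₂) :
    (ρ / s) ^ β₂ ≤ c₂ * (r / s) * (φ ρ / φ r) := by
  have hr : 0 < r := hρ.trans_le hρr
  have hs : 0 < s := hr.trans_le hrs
  have hφr := hφ r hr
  rw [div_le_iff₀ (hφ ρ hρ)] at hscale
  have hρr_pow : (ρ / r) ^ β₂ ≤ c₂ * (φ ρ / φ r) := by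
    rw [← mul_div_assoc, le_div_iff₀ hφr]
    calc
      (ρ / r) ^ β₂ * φ r ≤ (ρ / r) ^ β₂ * (c₂ * (r / ρ) ^ β₂ * φ ρ) := by gcongr
      _ = c₂ * φ ρ * (ρ / r * (r / ρ)) ^ β₂ := by
        rw [mul_rpow (by positivity) (by positivity)]; ring
      _ = c₂ * φ ρ := by
        rw [div_mul_div_cancel₀' hρ.ne', div_self hr.ne', one_rpow, mul_one]
  calc (ρ / s) ^ β₂ = (ρ / r) ^ β₂ * (r / s) ^ β₂ := by
        rw [← mul_rpow (by positivity) (by positivity), div_mul_div_cancel₀ hr.ne']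
    _ ≤ (ρ / r) ^ β₂ * (r / s) := by
        gcongr
        exact rpow_le_self_of_le_one (by positivity) ((div_le_one hs).2 hrs) hβ₂
    _ ≤ c₂ * (φ ρ / φ r) * (r / s) := by gcongr
    _ = c₂ * (r / s) * (φ ρ / φ r) := by ring

variable {M : Type*} {V : M → ℝ → ℝ} {Cμ d₂ : ℝ}

theorem exists_volume_ratio_mul_exp_le {b : ℝ} (hCμ : 0 < Cμ)
    (hd₂ : 0 < d₂) (hVD : ∀ x r R, 0 < r → r ≤ R → V x R / V x r ≤ Cμ * (R / r) ^ d₂)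
    (hb : 0 < b) (ha : 0 < a) (hc₁ : 0 < c₁) (hc₂ : 0 < c₂) (hβ₁ : 1 < β₁) (hβ₁₂ : β₁ ≤ β₂)
    (hφ : ∀ s, 0 < s → 0 < φ s) (hmono : StrictMonoOn φ (Ici 0))
    (hscale : ∀ r R : ℝ, 0 < r → r ≤ R →
      c₁ * (R / r) ^ β₁ ≤ φ R / φ r ∧ φ R / φ r ≤ c₂ * (R / r) ^ β₂) :
    ∃ K > 0, ∀ x ρ r s u, 0 < ρ → ρ ≤ r → r ≤ s → 0 < u → φ u / u ≤ a * (φ ρ / s) →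
      V x (2 * s) / V x ρ * exp (-(b * s / u)) ≤ K * (φ ρ / φ r) * (r / s) := by
  have hβ₁0 : 0 < β₁ := by linarith
  -- `q` makes `(s/ρ)^d₂ (s/ρ)^(-β₁ q) = (ρ/s)^β₂`, which the upper scaling of `φ` bounds
  -- by `c₂ (r/s) φ ρ / φ r`.
  set q := (d₂ + β₂) / β₁
  have hq : 0 < q := div_pos (by linarith) hβ₁0
  obtain ⟨C, hC, hdecay⟩ := exists_exp_neg_le_mul_rpow hb hq ha hc₁ hc₂
    hβ₁ hβ₁₂ hφ hscale
  refine ⟨Cμ * 2 ^ d₂ * (C * c₁ ^ (-q)) * c₂, by positivity, ?_⟩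
  intro x ρ r s u hρ hρr hrs hu hu_ψ
  have hs : 0 < s := hρ.trans_le (hρr.trans hrs)
  set σ := s / ρ
  have hσ : 0 < σ := by positivity
  have hvol : V x (2 * s) / V x ρ ≤ Cμ * 2 ^ d₂ * σ ^ d₂ := by
    have := hVD x ρ (2 * s) hρ (by linarith)
    rwa [mul_div_assoc, mul_rpow zero_le_two hσ.le, ← mul_assoc] at this
  have hexp : exp (-(b * s / u)) ≤ C * c₁ ^ (-q) * σ ^ (-(d₂ + β₂)) := calc
    exp (-(b * s / u)) ≤ C * (φ s / φ ρ) ^ (-q) :=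
      hdecay s (φ ρ) u hs (hφ ρ hρ) hu (hmono.monotoneOn hρ.le hs.le (hρr.trans hrs)) hu_ψ
    _ ≤ C * (c₁ * σ ^ β₁) ^ (-q) := mul_le_mul_of_nonneg_left
      (rpow_le_rpow_of_nonpos (by positivity) (hscale ρ s hρ (hρr.trans hrs)).1
        (neg_nonpos.2 hq.le)) hC.le
    _ = C * c₁ ^ (-q) * σ ^ (-(d₂ + β₂)) := by
      rw [mul_rpow hc₁.le (by positivity), ← rpow_mul hσ.le, mul_neg, mul_div_cancel₀ _ hβ₁0.ne',
        mul_assoc]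
  calc V x (2 * s) / V x ρ * exp (-(b * s / u))
      ≤ Cμ * 2 ^ d₂ * σ ^ d₂ * (C * c₁ ^ (-q) * σ ^ (-(d₂ + β₂))) :=
        mul_le_mul hvol hexp (exp_pos _).le (by positivity)
    _ = Cμ * 2 ^ d₂ * (C * c₁ ^ (-q)) * (σ ^ d₂ * σ ^ (-(d₂ + β₂))) := by ring
    _ = Cμ * 2 ^ d₂ * (C * c₁ ^ (-q)) * (ρ / s) ^ β₂ := by
      rw [← rpow_add hσ, show d₂ + -(d₂ + β₂) = -β₂ by ring, rpow_neg hσ.le, ← inv_rpow hσ.le,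
        inv_div]
    _ ≤ Cμ * 2 ^ d₂ * (C * c₁ ^ (-q)) * (c₂ * (r / s) * (φ ρ / φ r)) := by
      gcongr
      exact rpow_div_le_mul_div_of_scaling (hβ₁.le.trans hβ₁₂) hρ hρr hrs hφ (hscale ρ r hρ hρr).2
    _ = Cμ * 2 ^ d₂ * (C * c₁ ^ (-q)) * c₂ * (φ ρ / φ r) * (r / s) := by ring

theorem exists_volume_ratio_div_le {c β : ℝ} (hCμ : 0 < Cμ) (hc : 0 < c)
    (hVD : ∀ x r R, 0 < r → r ≤ R → V x R / V x r ≤ Cμ * (R / r) ^ d₂)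
    (hφ : ∀ s, 0 < s → 0 < φ s) (hscale : ∀ r R, 0 < r → r ≤ R → c * (R / r) ^ β ≤ φ R / φ r) :
    ∃ K > 0, ∀ x r s, 0 < r → r ≤ s → V x (2 * s) / V x s / φ s ≤ K / φ r * (r / s) ^ β := by
  refine ⟨Cμ * 2 ^ d₂ / c, by positivity, fun x r s hr hrs => ?_⟩
  have hs : 0 < s := hr.trans_le hrs
  have hvol : V x (2 * s) / V x s ≤ Cμ * 2 ^ d₂ := by
    simpa [mul_div_assoc, div_self hs.ne'] using hVD x s (2 * s) hs (by linarith)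
  have hφs : (φ s)⁻¹ ≤ c⁻¹ * (r / s) ^ β / φ r := by
    have hφr := hφ r hr
    have := hscale r s hr hrs
    rw [le_div_iff₀ hφr] at this
    calc (φ s)⁻¹ ≤ (c * (s / r) ^ β * φ r)⁻¹ := inv_anti₀ (by positivity) this
      _ = c⁻¹ * (r / s) ^ β / φ r := by
        rw [← inv_div s, inv_rpow (by positivity)]; field_simp
  calc V x (2 * s) / V x s / φ s = V x (2 * s) / V x s * (φ s)⁻¹ := div_eq_mul_inv _ _
    _ ≤ Cμ * 2 ^ d₂ * (c⁻¹ * (r / s) ^ β / φ r) :=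
      mul_le_mul hvol hφs (inv_nonneg.2 (hφ s hs).le) (by positivity)
    _ = Cμ * 2 ^ d₂ / c / φ r * (r / s) ^ β := by ring

end Scaling

theorem compl_ball_subset_iUnion_annulus {M : Type*} [PseudoMetricSpace M] (x : M) {r : ℝ}
    (hr : 0 < r) : (ball x r)ᶜ ⊆ ⋃ k : ℕ, ball x (2 ^ (k + 1) * r) \ ball x (2 ^ k * r) := by
  intro y hy
  obtain ⟨k, hk, hk'⟩ := exists_nat_pow_near ((one_le_div hr).2 (not_lt.1 hy)) one_lt_two
  exact mem_iUnion.2 ⟨k, (div_lt_iff₀ hr).1 hk', not_lt.2 ((le_div_iff₀ hr).1 hk)⟩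

theorem setIntegral_compl_ball_le_tsum {M : Type*} [PseudoMetricSpace M] [MeasurableSpace M]
    [OpensMeasurableSpace M] {μ : Measure M} {x : M} {r : ℝ} (hr : 0 < r) {f : M → ℝ}
    (hf : ∀ y, 0 ≤ f y) {F g : ℕ → ℝ} (hfF : ∀ (k : ℕ) y, 2 ^ k * r ≤ dist x y → f y ≤ F k)
    (hμ : ∀ k : ℕ, μ (ball x (2 ^ (k + 1) * r)) ≠ ∞)
    (hFg : ∀ k : ℕ, F k * μ.real (ball x (2 ^ (k + 1) * r)) ≤ g k)
    (hg : ∀ k, 0 ≤ g k) (hg_sum : Summable g) :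
    ∫ y in (ball x r)ᶜ, f y ∂μ ≤ ∑' k, g k := by
  have hannulus (k : ℕ) : ∫⁻ y in ball x (2 ^ (k + 1) * r) \ ball x (2 ^ k * r),
      ENNReal.ofReal (f y) ∂μ ≤ ENNReal.ofReal (g k) := calc
    _ ≤ ∫⁻ _ in ball x (2 ^ (k + 1) * r) \ ball x (2 ^ k * r), ENNReal.ofReal (F k) ∂μ :=
      setLIntegral_mono' (measurableSet_ball.diff measurableSet_ball) fun y hy =>
        ENNReal.ofReal_le_ofReal (hfF k y (by rw [dist_comm]; exact not_lt.1 hy.2))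
    _ ≤ ENNReal.ofReal (F k) * μ (ball x (2 ^ (k + 1) * r)) := by
      rw [setLIntegral_const]; gcongr; exact sdiff_subset
    _ = ENNReal.ofReal (F k * μ.real (ball x (2 ^ (k + 1) * r))) := by
      rw [ENNReal.ofReal_mul' measureReal_nonneg, ofReal_measureReal (hμ k)]
    _ ≤ ENNReal.ofReal (g k) := ENNReal.ofReal_le_ofReal (hFg k)
  -- This bound on the Bochner integral needs no integrability of `f`.
  refine (Real.le_norm_self _).trans ((norm_integral_le_lintegral_norm _).trans ?_)
  refine ENNReal.toReal_le_of_le_ofReal (tsum_nonneg hg) ?_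
  rw [ENNReal.ofReal_tsum_of_nonneg hg hg_sum]
  simp_rw [Real.norm_of_nonneg (hf _)]
  calc ∫⁻ y in (ball x r)ᶜ, ENNReal.ofReal (f y) ∂μ
      ≤ ∫⁻ y in ⋃ k : ℕ, ball x (2 ^ (k + 1) * r) \ ball x (2 ^ k * r), ENNReal.ofReal (f y) ∂μ :=
        lintegral_mono_set (compl_ball_subset_iUnion_annulus x hr)
    _ ≤ _ := lintegral_iUnion_le _ _
    _ ≤ _ := ENNReal.tsum_le_tsum hannulus

noncomputable def mixedKernelBound {M : Type*} (V : M → ℝ → ℝ) (φcInv ψInv φj : ℝ → ℝ)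
    (A b t : ℝ) (x : M) (d : ℝ) : ℝ :=
  A * (1 / V x (φcInv t) * exp (-(b * d / ψInv (t / d))) + t / (V x d * φj d))

section MixedKernelBound

variable {M : Type*} {V : M → ℝ → ℝ} {φcInv ψInv φj : ℝ → ℝ} {A b t : ℝ} {x : M}

theorem mixedKernelBound_antitoneOn (hA : 0 ≤ A) (hb : 0 ≤ b) (ht : 0 < t)
    (hVρ : 0 ≤ V x (φcInv t)) (hV : ∀ s, 0 < s → 0 < V x s) (hV_mono : MonotoneOn (V x) (Ioi 0))
    (hψInv : ∀ v, 0 < v → 0 < ψInv v) (hψInv_mono : MonotoneOn ψInv (Ici 0))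
    (hφj : ∀ s, 0 < s → 0 < φj s) (hφj_mono : ∀ r R, 0 < r → r ≤ R → φj r ≤ φj R) :
    AntitoneOn (mixedKernelBound V φcInv ψInv φj A b t x) (Ioi 0) := by
  intro s (hs : 0 < s) d (hd : 0 < d) hsd
  have hψs := hψInv (t / s) (by positivity)
  have hψd := hψInv (t / d) (by positivity)
  have hVs := hV s hs
  have hVd := hV d hd
  have hφjs := hφj s hs
  unfold mixedKernelBound
  gcongr
  · exact hψInv_mono (div_nonneg ht.le hd.le) (div_nonneg ht.le hs.le) (by gcongr)
  · exact hV_mono hs hd hsd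
  · exact hφj_mono s d hs hsd

theorem mixedKernelBound_mul_le {s G J : ℝ} (hA : 0 ≤ A) (ht : 0 ≤ t)
    (hG : V x (2 * s) / V x (φcInv t) * exp (-(b * s / ψInv (t / s))) ≤ G)
    (hJ : V x (2 * s) / V x s / φj s ≤ J) :
    mixedKernelBound V φcInv ψInv φj A b t x s * V x (2 * s) ≤ A * (G + t * J) := calc
  _ = A * (V x (2 * s) / V x (φcInv t) * exp (-(b * s / ψInv (t / s))) +
      t * (V x (2 * s) / V x s / φj s)) := by unfold mixedKernelBound; ring
  _ ≤ A * (G + t * J) := by gcongr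

end MixedKernelBound

theorem setIntegral_compl_ball_le_of_le_mixedKernelBound {M : Type*} [MetricSpace M]
    [MeasurableSpace M] [OpensMeasurableSpace M] {μ : Measure M} {V : M → ℝ → ℝ}
    {φcInv ψInv φj : ℝ → ℝ} {A b t r β G J : ℝ} {x : M} {p : M → ℝ}
    (hV : ∀ s, V x s = (μ (ball x s)).toReal) (hfin : ∀ s, 0 < s → μ (ball x s) < ⊤)
    (hpos : ∀ s, 0 < s → 0 < μ (ball x s)) (hA : 0 ≤ A) (hb : 0 ≤ b) (ht : 0 < t) (hr : 0 < r)
    (hβ : 0 < β) (hψInv : ∀ v, 0 < v → 0 < ψInv v) (hψInv_mono : MonotoneOn ψInv (Ici 0))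
    (hφj : ∀ s, 0 < s → 0 < φj s) (hφj_mono : ∀ r R, 0 < r → r ≤ R → φj r ≤ φj R)
    (hp0 : ∀ y, 0 ≤ p y)
    (hp : ∀ y, x ≠ y → p y ≤ mixedKernelBound V φcInv ψInv φj A b t x (dist x y))
    (hG0 : 0 ≤ G) (hJ0 : 0 ≤ J)
    (hG : ∀ s, r ≤ s → V x (2 * s) / V x (φcInv t) * exp (-(b * s / ψInv (t / s))) ≤ G * (r / s))
    (hJ : ∀ s, r ≤ s → V x (2 * s) / V x s / φj s ≤ J * (r / s) ^ β) :
    ∫ y in (ball x r)ᶜ, p y ∂μ ≤ A * (2 * G + t * J * (1 - 2 ^ (-β))⁻¹) := by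
  have hVpos (s : ℝ) (hs : 0 < s) : 0 < V x s := by
    rw [hV]; exact ENNReal.toReal_pos (hpos s hs).ne' (hfin s hs).ne
  have hV_mono : MonotoneOn (V x) (Ioi 0) := fun s _ s' hs' hss' => by
    rw [hV, hV]; exact measureReal_mono (ball_subset_ball hss') (hfin s' hs').ne
  have hanti := mixedKernelBound_antitoneOn (φcInv := φcInv) hA hb ht (by rw [hV]; positivity)
    hVpos hV_mono hψInv hψInv_mono hφj hφj_mono
  set w : ℝ := 2 ^ (-β)
  have hsum : HasSum (fun k : ℕ => A * G * (1 / 2) ^ k + A * t * J * w ^ k)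
      (A * G * 2 + A * t * J * (1 - w)⁻¹) :=
    (hasSum_geometric_two.mul_left _).add ((hasSum_geometric_of_lt_one (by positivity)
      (rpow_lt_one_of_one_lt_of_neg one_lt_two (neg_neg_of_pos hβ))).mul_left _)
  refine (setIntegral_compl_ball_le_tsum hr hp0
    (F := fun k => mixedKernelBound V φcInv ψInv φj A b t x (2 ^ k * r))
    (fun k y hy => ?_) (fun k => (hfin _ (by positivity)).ne) (fun k => ?_) (fun k => by positivity)
    hsum.summable).trans_eq (by rw [hsum.tsum_eq]; ring)
  · have hs : 0 < 2 ^ k * r := by positivity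
    exact (hp y (dist_pos.1 (hs.trans_le hy))).trans (hanti hs (hs.trans_le hy) hy)
  · have hrs : r ≤ 2 ^ k * r := le_mul_of_one_le_left hr.le (one_le_pow₀ one_le_two)
    have hratio : r / (2 ^ k * r) = (1 / 2) ^ k := by
      rw [div_mul_cancel_right₀ hr.ne', one_div, inv_pow]
    have hratio_pow : (r / (2 ^ k * r)) ^ β = w ^ k := by
      rw [hratio, ← rpow_pow_comm (by norm_num), one_div, inv_rpow zero_le_two,
        ← rpow_neg zero_le_two]
    have hball : μ.real (ball x (2 ^ (k + 1) * r)) = V x (2 * (2 ^ k * r)) := by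
      rw [hV, pow_succ, mul_comm _ 2, mul_assoc]; rfl
    calc _ ≤ A * (G * (r / (2 ^ k * r)) + t * (J * (r / (2 ^ k * r)) ^ β)) := by
          rw [hball]; exact mixedKernelBound_mul_le hA ht.le (hG _ hrs) (hJ _ hrs)
      _ = _ := by rw [hratio_pow, hratio]; ring

theorem stmt_9_general {M : Type*} [MetricSpace M] [MeasurableSpace M] [BorelSpace M]
    (μ : Measure M) (V : M → ℝ → ℝ)
    (hV : ∀ x r, V x r = (μ (ball x r)).toReal)
    (hfin : ∀ (x : M) (r : ℝ), 0 < r → μ (ball x r) < ⊤)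
    (hpos : ∀ (x : M) (r : ℝ), 0 < r → 0 < μ (ball x r))
    (Cμ d₂ : ℝ) (hCμ : 0 < Cμ) (hd₂ : 0 < d₂)
    (hVD : ∀ (x : M) (r R : ℝ), 0 < r → r ≤ R → V x R / V x r ≤ Cμ * (R / r) ^ d₂)
    -- the scale function φ_c, a strictly increasing continuous bijection of [0,∞)
    (φc φcInv : ℝ → ℝ) (hφc0 : φc 0 = 0)
    (hφcMono : StrictMonoOn φc (Ici 0))
    (hφcInv_nonneg : ∀ t : ℝ, 0 ≤ t → 0 ≤ φcInv t)
    (hφcInv_right : ∀ t : ℝ, 0 ≤ t → φc (φcInv t) = t)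
    (c₁ c₂ β₁ β₂ : ℝ) (hc₁ : 0 < c₁) (hc₂ : 0 < c₂) (hβ₁ : 1 < β₁) (hβ₁₂ : β₁ ≤ β₂)
    (hφcScale : ∀ r R : ℝ, 0 < r → r ≤ R →
      c₁ * (R / r) ^ β₁ ≤ φc R / φc r ∧ φc R / φc r ≤ c₂ * (R / r) ^ β₂)
    -- ψ, a strictly increasing bijection of [0,∞) comparable to φ_c(r)/r
    (ψ ψInv : ℝ → ℝ) (a : ℝ) (ha : 1 ≤ a)
    (hψ0 : ψ 0 = 0) (hψMono : StrictMonoOn ψ (Ici 0))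
    (hψInv_nonneg : ∀ t : ℝ, 0 ≤ t → 0 ≤ ψInv t)
    (hψInv_right : ∀ t : ℝ, 0 ≤ t → ψ (ψInv t) = t)
    (hψcomp : ∀ r : ℝ, 0 < r → a⁻¹ * (φc r / r) ≤ ψ r ∧ ψ r ≤ a * (φc r / r))
    -- the jump scale function φ_j, nondecreasing with a lower scaling bound
    (φj : ℝ → ℝ) (hφjpos : ∀ r : ℝ, 0 < r → 0 < φj r)
    (hφjmono : ∀ r R : ℝ, 0 < r → r ≤ R → φj r ≤ φj R)
    (c₃ β₁' : ℝ) (hc₃ : 0 < c₃) (hβ₁' : 0 < β₁')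
    (hφjscale : ∀ r R : ℝ, 0 < r → r ≤ R → c₃ * (R / r) ^ β₁' ≤ φj R / φj r)
    (A b : ℝ) (hA : 0 < A) (hb : 0 < b) :
    ∃ c : ℝ, 0 < c ∧ ∀ t : ℝ, 0 < t → ∀ p : M → M → ℝ,
      Measurable (Function.uncurry p) → (∀ x y, 0 ≤ p x y) →
      (∀ x y : M, x ≠ y → p x y ≤
        A * ((1 / V x (φcInv t)) * Real.exp (-(b * dist x y / ψInv (t / dist x y))) +
          t / (V x (dist x y) * φj (dist x y)))) →
      ∀ r : ℝ, 0 < r → t ≤ φc r → ∀ x : M,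
        (∫ y in (ball x r)ᶜ, p x y ∂μ) ≤ c * t * (1 / φc r + 1 / φj r) := by
  have ha₀ : 0 < a := by linarith
  have hφc_pos (s : ℝ) (hs : 0 < s) : 0 < φc s := hφc0 ▸ hφcMono self_mem_Ici hs.le hs
  have hψInv_pos (v : ℝ) (hv : 0 < v) : 0 < ψInv v :=
    pos_of_rightInverse hψ0 hψInv_nonneg hψInv_right hv
  obtain ⟨KG, hKG, hGauss⟩ := exists_volume_ratio_mul_exp_le hCμ hd₂ hVD hb ha₀ hc₁ hc₂ hβ₁ hβ₁₂
    hφc_pos hφcMono hφcScale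
  obtain ⟨KJ, hKJ, hJump⟩ := exists_volume_ratio_div_le hCμ hc₃ hVD hφjpos hφjscale
  set w : ℝ := 2 ^ (-β₁')
  have hw : 0 < (1 - w)⁻¹ :=
    inv_pos.2 (sub_pos.2 (rpow_lt_one_of_one_lt_of_neg one_lt_two (by linarith)))
  refine ⟨A * (2 * KG + KJ * (1 - w)⁻¹), by positivity, fun t ht p _ hp0 hp r hr htr x => ?_⟩
  have hρ : 0 < φcInv t := pos_of_rightInverse hφc0 hφcInv_nonneg hφcInv_right ht
  have hρt : φc (φcInv t) = t := hφcInv_right t ht.le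
  have hρr : φcInv t ≤ r := (hφcMono.le_iff_le hρ.le hr.le).1 (by rwa [hρt])
  have hφcr := hφc_pos r hr
  have hφjr := hφjpos r hr
  refine (setIntegral_compl_ball_le_of_le_mixedKernelBound (hV x) (hfin x) (hpos x) hA.le hb.le ht
    hr hβ₁' hψInv_pos (hψMono.monotoneOn_of_rightInverse hψInv_nonneg hψInv_right) hφjpos hφjmono
    (hp0 x) (hp x) (G := KG * (t / φc r)) (by positivity) (by positivity) (fun s hrs => ?_)
    (fun s hrs => hJump x r s hr hrs)).trans ?_
  · have hts : 0 < t / s := div_pos ht (hr.trans_le hrs)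
    have hu := hψInv_pos _ hts
    have hu_ψ := (hψcomp _ hu).1
    rw [hψInv_right _ hts.le, inv_mul_le_iff₀ ha₀] at hu_ψ
    simpa only [hρt] using hGauss x _ r s _ hρ hρr hrs hu (by rwa [hρt])
  · have hcross : 0 ≤ A * t * (2 * KG / φj r + KJ * (1 - w)⁻¹ / φc r) := by positivity
    calc _ = A * (2 * KG + KJ * (1 - w)⁻¹) * t * (1 / φc r + 1 / φj r) -
          A * t * (2 * KG / φj r + KJ * (1 - w)⁻¹ / φc r) := by ring
      _ ≤ _ := sub_le_self _ hcross

/-- tail estimate `∫_{B(x,r)ᶜ} p(x,y) μ(dy) ≤ c t (1/φ_c(r) + 1/φ_j(r))`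
for a kernel `p` dominated by the mixed (sub-Gaussian + jump) bound, when `φ_c(r) ≥ t`. -/
theorem stmt_9 {M : Type*} [MetricSpace M] [MeasurableSpace M] [BorelSpace M]
    (μ : Measure M) (V : M → ℝ → ℝ)
    (hV : ∀ x r, V x r = (μ (ball x r)).toReal)
    (hfin : ∀ (x : M) (r : ℝ), 0 < r → μ (ball x r) < ⊤)
    (hpos : ∀ (x : M) (r : ℝ), 0 < r → 0 < μ (ball x r))
    (Cμ d₂ : ℝ) (hCμ : 0 < Cμ) (hd₂ : 0 < d₂)
    (hVD : ∀ (x : M) (r R : ℝ), 0 < r → r ≤ R → V x R / V x r ≤ Cμ * (R / r) ^ d₂)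
    -- the scale function φ_c, a strictly increasing continuous bijection of [0,∞)
    (φc φcInv : ℝ → ℝ) (hφc0 : φc 0 = 0)
    (hφcMono : StrictMonoOn φc (Ici 0)) (hφcCont : ContinuousOn φc (Ici 0))
    (hφcInv_nonneg : ∀ t : ℝ, 0 ≤ t → 0 ≤ φcInv t)
    (hφcInv_left : ∀ r : ℝ, 0 ≤ r → φcInv (φc r) = r)
    (hφcInv_right : ∀ t : ℝ, 0 ≤ t → φc (φcInv t) = t)
    (c₁ c₂ β₁ β₂ : ℝ) (hc₁ : 0 < c₁) (hc₂ : 0 < c₂) (hβ₁ : 1 < β₁) (hβ₁₂ : β₁ ≤ β₂)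
    (hφcScale : ∀ r R : ℝ, 0 < r → r ≤ R →
      c₁ * (R / r) ^ β₁ ≤ φc R / φc r ∧ φc R / φc r ≤ c₂ * (R / r) ^ β₂)
    -- ψ, a strictly increasing bijection of [0,∞) comparable to φ_c(r)/r
    (ψ ψInv : ℝ → ℝ) (a : ℝ) (ha : 1 ≤ a)
    (hψ0 : ψ 0 = 0) (hψMono : StrictMonoOn ψ (Ici 0))
    (hψInv_nonneg : ∀ t : ℝ, 0 ≤ t → 0 ≤ ψInv t)
    (hψInv_left : ∀ r : ℝ, 0 ≤ r → ψInv (ψ r) = r)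
    (hψInv_right : ∀ t : ℝ, 0 ≤ t → ψ (ψInv t) = t)
    (hψcomp : ∀ r : ℝ, 0 < r → a⁻¹ * (φc r / r) ≤ ψ r ∧ ψ r ≤ a * (φc r / r))
    -- the jump scale function φ_j, nondecreasing with a lower scaling bound
    (φj : ℝ → ℝ) (hφjpos : ∀ r : ℝ, 0 < r → 0 < φj r)
    (hφjmono : ∀ r R : ℝ, 0 < r → r ≤ R → φj r ≤ φj R)
    (c₃ β₁' : ℝ) (hc₃ : 0 < c₃) (hβ₁' : 0 < β₁')
    (hφjscale : ∀ r R : ℝ, 0 < r → r ≤ R → c₃ * (R / r) ^ β₁' ≤ φj R / φj r)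
    (A b : ℝ) (hA : 0 < A) (hb : 0 < b) :
    ∃ c : ℝ, 0 < c ∧ ∀ t : ℝ, 0 < t → ∀ p : M → M → ℝ,
      Measurable (Function.uncurry p) → (∀ x y, 0 ≤ p x y) →
      (∀ x y : M, x ≠ y → p x y ≤
        A * ((1 / V x (φcInv t)) * Real.exp (-(b * dist x y / ψInv (t / dist x y))) +
          t / (V x (dist x y) * φj (dist x y)))) →
      ∀ r : ℝ, 0 < r → t ≤ φc r → ∀ x : M,
        (∫ y in (ball x r)ᶜ, p x y ∂μ) ≤ c * t * (1 / φc r + 1 / φj r) :=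
  stmt_9_general μ V hV hfin hpos Cμ d₂ hCμ hd₂ hVD φc φcInv hφc0 hφcMono hφcInv_nonneg hφcInv_right
    c₁ c₂ β₁ β₂ hc₁ hc₂ hβ₁ hβ₁₂ hφcScale ψ ψInv a ha hψ0 hψMono hψInv_nonneg hψInv_right hψcomp φj
    hφjpos hφjmono c₃ β₁' hc₃ hβ₁' hφjscale A b hA hb
end

section
/- Let φ_c : [0,∞) → [0,∞) be a strictly increasing continuous bijection satisfying c₁ (R/r)^{β₁} ≤ φ_c(R)/φ_c(r) ≤ c₂ (R/r)^{β₂} for all 0 < r ≤ R, with constants c₁, c₂ > 0 and 1 < β₁ ≤ β₂. Let ψ : [0,∞) → [0,∞) be a strictly increasing bijection with a^{-1} φ_c(r)/r ≤ ψ(r) ≤ a φ_c(r)/r for all r > 0, for some a ≥ 1. Then for every C* > 0 there exists C₀ > 0 such that for every t ≥ 1, the function r ↦ F_{1,t}(r) := exp( C* · r/ψ^{-1}(t/r) ) / ( r/ψ^{-1}(t/r) ) is strictly increasing on the interval [C₀ φ_c^{-1}(t), ∞). -/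
open Set Real Filter

/-
For `r ≥ C₀ φ_c⁻¹(t)` the lower scaling bound gives `φ_c(C* r) ≥ a C* t`, hence
`ψ(C* r) ≥ φ_c(C* r) / (a C* r) ≥ t / r`, i.e. `x(r) := r / ψ⁻¹(t/r) ≥ 1 / C*`. Since `ψ⁻¹` is
increasing, `x` is strictly increasing in `r`, and `x ↦ exp(C* x) / x` is strictly increasing on
`[1/C*, ∞)`; the composite is therefore strictly increasing.
-/

lemma strictMonoOn_exp_mul_div {c : ℝ} (hc : 0 < c) :
    StrictMonoOn (fun x : ℝ => exp (c * x) / x) (Ici (1 / c)) := by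
  intro x hx y hy hxy
  have hx0 : 0 < x := lt_of_lt_of_le (by positivity) hx
  have hy0 : 0 < y := lt_of_lt_of_le (by positivity) hy
  have hcx : 1 ≤ c * x := by rwa [mem_Ici, div_le_iff₀' hc] at hx
  have hexp : c * (y - x) + 1 < exp (c * (y - x)) :=
    add_one_lt_exp (mul_pos hc (sub_pos.mpr hxy)).ne'
  have hsplit : exp (c * y) = exp (c * x) * exp (c * (y - x)) := by
    rw [← exp_add]; ring_nf
  -- `x (1 + c (y - x)) ≥ y` because `c x ≥ 1`
  have hy_lt : y < x * exp (c * (y - x)) := by nlinarith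
  rw [div_lt_div_iff₀ hx0 hy0, hsplit]
  nlinarith [exp_pos (c * x)]

lemma exists_le_div_of_rpow_le_div {φ : ℝ → ℝ} {c β : ℝ} (hc : 0 < c) (hβ : 0 < β)
    (hscale : ∀ r R : ℝ, 0 < r → r ≤ R → c * (R / r) ^ β ≤ φ R / φ r) (A : ℝ) :
    ∃ M : ℝ, 1 ≤ M ∧ ∀ u : ℝ, 0 < u → A ≤ φ (M * u) / φ u := by
  obtain ⟨M, hMA, hM1⟩ :=
    ((((tendsto_rpow_atTop hβ).const_mul_atTop hc).eventually_ge_atTop A).and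
      (eventually_ge_atTop 1)).exists
  refine ⟨M, hM1, fun u hu => ?_⟩
  have hscaleM := hscale u (M * u) hu (le_mul_of_one_le_left hu.le hM1)
  rw [mul_div_assoc, div_self hu.ne', mul_one] at hscaleM
  exact hMA.trans hscaleM

section RightInverse

variable {f g : ℝ → ℝ}

lemma rightInverse_pos (hf0 : f 0 = 0) (hfg : ∀ s : ℝ, 0 ≤ s → f (g s) = s)
    (hg0 : ∀ s : ℝ, 0 ≤ s → 0 ≤ g s) {s : ℝ} (hs : 0 < s) : 0 < g s := by
  refine (hg0 s hs.le).lt_of_ne fun h => hs.ne ?_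
  rw [← hfg s hs.le, ← h, hf0]

lemma rightInverse_le_iff (hf : StrictMonoOn f (Ici 0)) (hg0 : ∀ s : ℝ, 0 ≤ s → 0 ≤ g s)
    (hfg : ∀ s : ℝ, 0 ≤ s → f (g s) = s) {s x : ℝ} (hs : 0 ≤ s) (hx : 0 ≤ x) :
    g s ≤ x ↔ s ≤ f x := by
  rw [← hf.le_iff_le (mem_Ici.mpr (hg0 s hs)) (mem_Ici.mpr hx), hfg s hs]

lemma strictMonoOn_rightInverse (hf : StrictMonoOn f (Ici 0))
    (hg0 : ∀ s : ℝ, 0 ≤ s → 0 ≤ g s) (hfg : ∀ s : ℝ, 0 ≤ s → f (g s) = s) :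
    StrictMonoOn g (Ici 0) := by
  intro s hs s' hs' hss'
  rwa [← hf.lt_iff_lt (mem_Ici.mpr (hg0 s hs)) (mem_Ici.mpr (hg0 s' hs')), hfg s hs, hfg s' hs']

lemma strictMonoOn_div_rightInverse_div (hf0 : f 0 = 0) (hf : StrictMonoOn f (Ici 0))
    (hg0 : ∀ s : ℝ, 0 ≤ s → 0 ≤ g s) (hfg : ∀ s : ℝ, 0 ≤ s → f (g s) = s)
    {t : ℝ} (ht : 0 < t) :
    StrictMonoOn (fun r : ℝ => r / g (t / r)) (Ioi 0) := by
  intro r hr r' hr' hrr'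
  have hpos : ∀ {r : ℝ}, 0 < r → 0 < g (t / r) := fun hr =>
    rightInverse_pos hf0 hfg hg0 (div_pos ht hr)
  have hdec : g (t / r') < g (t / r) :=
    strictMonoOn_rightInverse hf hg0 hfg (mem_Ici.mpr (div_pos ht hr').le)
      (mem_Ici.mpr (div_pos ht hr).le) (div_lt_div_of_pos_left ht hr hrr')
  rw [div_lt_div_iff₀ (hpos hr) (hpos hr')]
  nlinarith [mul_lt_mul_of_pos_left hdec hr, mul_lt_mul_of_pos_right hrr' (hpos hr)]

end RightInverse

theorem stmt_11_general
    (φc φcInv : ℝ → ℝ) (hφc0 : φc 0 = 0)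
    (hφcMono : StrictMonoOn φc (Ici 0))
    (hφcInv_nonneg : ∀ t : ℝ, 0 ≤ t → 0 ≤ φcInv t)
    (hφcInv_right : ∀ t : ℝ, 0 ≤ t → φc (φcInv t) = t)
    (c₁ c₂ β₁ β₂ : ℝ) (hc₁ : 0 < c₁) (hβ₁ : 1 < β₁)
    (hφcScale : ∀ r R : ℝ, 0 < r → r ≤ R →
      c₁ * (R / r) ^ β₁ ≤ φc R / φc r ∧ φc R / φc r ≤ c₂ * (R / r) ^ β₂)
    (ψ ψInv : ℝ → ℝ) (a : ℝ) (ha : 1 ≤ a)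
    (hψ0 : ψ 0 = 0) (hψMono : StrictMonoOn ψ (Ici 0))
    (hψInv_nonneg : ∀ t : ℝ, 0 ≤ t → 0 ≤ ψInv t)
    (hψInv_right : ∀ t : ℝ, 0 ≤ t → ψ (ψInv t) = t)
    (hψcomp : ∀ r : ℝ, 0 < r → a⁻¹ * (φc r / r) ≤ ψ r ∧ ψ r ≤ a * (φc r / r)) :
    ∀ Cs : ℝ, 0 < Cs → ∃ C₀ : ℝ, 0 < C₀ ∧ ∀ t : ℝ, 1 ≤ t →
      StrictMonoOn (fun r : ℝ => Real.exp (Cs * (r / ψInv (t / r))) / (r / ψInv (t / r)))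
        (Ici (C₀ * φcInv t)) := by
  intro Cs hCs
  obtain ⟨M, hM1, hM⟩ := exists_le_div_of_rpow_le_div hc₁ (by linarith)
    (fun r R hr hrR => (hφcScale r R hr hrR).1) (a * Cs)
  refine ⟨M / Cs, by positivity, fun t ht => ?_⟩
  have ht0 : 0 < t := by linarith
  set u := φcInv t
  have hu : 0 < u := rightInverse_pos hφc0 hφcInv_right hφcInv_nonneg ht0
  have hφu : φc u = t := hφcInv_right t ht0.le
  have hpos : Ici (M / Cs * u) ⊆ Ioi 0 := fun r hr =>
    (mul_pos (div_pos (by linarith) hCs) hu).trans_le hr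
  refine (strictMonoOn_exp_mul_div hCs).comp
    ((strictMonoOn_div_rightInverse_div hψ0 hψMono hψInv_nonneg hψInv_right ht0).mono hpos)
    fun r hr => ?_
  have hr0 : 0 < r := hpos hr
  have hMu : M * u ≤ Cs * r := by
    rw [mem_Ici, div_mul_eq_mul_div, div_le_iff₀' hCs] at hr; exact hr
  have hφ : a * Cs * t ≤ φc (Cs * r) := calc
    a * Cs * t ≤ φc (M * u) := by rw [← hφu]; exact (le_div_iff₀ (hφu ▸ ht0)).mp (hM u hu)
    _ ≤ φc (Cs * r) := hφcMono.monotoneOn (mem_Ici.mpr (by positivity))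
      (mem_Ici.mpr (by positivity)) hMu
  have hψ : t / r ≤ ψ (Cs * r) := calc
    t / r = a⁻¹ * (a * Cs * t / (Cs * r)) := by field_simp
    _ ≤ a⁻¹ * (φc (Cs * r) / (Cs * r)) := by gcongr
    _ ≤ ψ (Cs * r) := (hψcomp (Cs * r) (by positivity)).1
  have hψInv := (rightInverse_le_iff hψMono hψInv_nonneg hψInv_right (div_pos ht0 hr0).le
    (by positivity)).mpr hψ
  rw [mem_Ici, div_le_div_iff₀ hCs (rightInverse_pos hψ0 hψInv_right hψInv_nonneg
    (div_pos ht0 hr0))]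
  linarith

/-- Lemma `L:keyexist`(i): for every `C* > 0` there is `C₀ > 0` such that
for every `t ≥ 1`, the function `r ↦ exp(C* r/ψ⁻¹(t/r)) / (r/ψ⁻¹(t/r))` is strictly
increasing on `[C₀ φ_c⁻¹(t), ∞)`. -/
theorem stmt_11
    (φc φcInv : ℝ → ℝ) (hφc0 : φc 0 = 0)
    (hφcMono : StrictMonoOn φc (Ici 0)) (hφcCont : ContinuousOn φc (Ici 0))
    (hφcInv_nonneg : ∀ t : ℝ, 0 ≤ t → 0 ≤ φcInv t)
    (hφcInv_left : ∀ r : ℝ, 0 ≤ r → φcInv (φc r) = r)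
    (hφcInv_right : ∀ t : ℝ, 0 ≤ t → φc (φcInv t) = t)
    (c₁ c₂ β₁ β₂ : ℝ) (hc₁ : 0 < c₁) (hc₂ : 0 < c₂) (hβ₁ : 1 < β₁) (hβ₁₂ : β₁ ≤ β₂)
    (hφcScale : ∀ r R : ℝ, 0 < r → r ≤ R →
      c₁ * (R / r) ^ β₁ ≤ φc R / φc r ∧ φc R / φc r ≤ c₂ * (R / r) ^ β₂)
    (ψ ψInv : ℝ → ℝ) (a : ℝ) (ha : 1 ≤ a)
    (hψ0 : ψ 0 = 0) (hψMono : StrictMonoOn ψ (Ici 0))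
    (hψInv_nonneg : ∀ t : ℝ, 0 ≤ t → 0 ≤ ψInv t)
    (hψInv_left : ∀ r : ℝ, 0 ≤ r → ψInv (ψ r) = r)
    (hψInv_right : ∀ t : ℝ, 0 ≤ t → ψ (ψInv t) = t)
    (hψcomp : ∀ r : ℝ, 0 < r → a⁻¹ * (φc r / r) ≤ ψ r ∧ ψ r ≤ a * (φc r / r)) :
    ∀ Cs : ℝ, 0 < Cs → ∃ C₀ : ℝ, 0 < C₀ ∧ ∀ t : ℝ, 1 ≤ t →
      StrictMonoOn (fun r : ℝ => Real.exp (Cs * (r / ψInv (t / r))) / (r / ψInv (t / r)))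
        (Ici (C₀ * φcInv t)) :=
  stmt_11_general φc φcInv hφc0 hφcMono hφcInv_nonneg hφcInv_right c₁ c₂ β₁ β₂ hc₁ hβ₁ hφcScale ψ
    ψInv a ha hψ0 hψMono hψInv_nonneg hψInv_right hψcomp
end

section
/- Let φ_c : [0,∞) → [0,∞) be a strictly increasing continuous bijection satisfying c₁ (R/r)^{β₁} ≤ φ_c(R)/φ_c(r) ≤ c₂ (R/r)^{β₂} for all 0 < r ≤ R, with constants c₁, c₂ > 0 and 1 < β₁ ≤ β₂. Let ψ : [0,∞) → [0,∞) be a strictly increasing bijection with a^{-1} φ_c(r)/r ≤ ψ(r) ≤ a φ_c(r)/r for all r > 0, for some a ≥ 1. Let φ_j : [0,∞) → [0,∞) be a strictly increasing bijection with φ_j^{-1}(t) ≤ φ_c^{-1}(t) for all t ≥ 1. Then for every C* > 0 there exist constants C₀, C^* > 0 such that for every t ≥ 1 there is a unique r_*(t) ∈ (C₀ φ_c^{-1}(t), ∞) with F_{1,t}(r_*(t)) = F_{2,t}(r_*(t)), F_{1,t}(r) < F_{2,t}(r) for all r ∈ (C₀ φ_c^{-1}(t), r_*(t)), and F_{1,t}(r)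 > F_{2,t}(r) for all r ∈ (r_*(t), ∞), where F_{1,t}(r) = exp( C* · r/ψ^{-1}(t/r) ) / ( r/ψ^{-1}(t/r) ) and F_{2,t}(r) = C^* ψ^{-1}(t/r) / φ_j^{-1}(t). -/
/-!
Write `g r = ψ⁻¹(t/r)` and `u r = r / g r`, so that `F₁ = exp (C* u) / u` and
`F₂ = C^* g / φ_j⁻¹(t)`. The lower comparison `ψ(r) ≥ a⁻¹ φ_c(r)/r` gives `g r ≤ φ_c⁻¹(t)` once
`r ≥ a φ_c⁻¹(t)`, so past `C₀ φ_c⁻¹(t)` with `C₀ = a + 1/C*` the slope `u` is at least `1/C*`.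
In that range `u ↦ exp (C* u) / u` is nondecreasing while `g` strictly decreases, hence `F₁ - F₂`
is strictly increasing and vanishes at most once. The lower scaling of `φ_c` and the upper
comparison for `ψ` give `g(M φ_c⁻¹(t)) ≥ ν φ_c⁻¹(t)` with `M, ν` independent of `t`; together with
`φ_j⁻¹ ≤ φ_c⁻¹` this makes `F₂ > F₁` at `M φ_c⁻¹(t)` once `C^*` is large. As `r → ∞`, `g → 0`,
so `F₂ → 0 < C* ≤ F₁`, and the intermediate value theorem gives the crossing point.
-/

open Set Real Filter Topology

section RightInverse

variable {f fInv : ℝ → ℝ}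

theorem pos_of_rightInverse_s12 (hf0 : f 0 = 0) (hnn : ∀ t, 0 ≤ t → 0 ≤ fInv t)
    (hright : ∀ t, 0 ≤ t → f (fInv t) = t) {x : ℝ} (hx : 0 < x) : 0 < fInv x := by
  refine (hnn x hx.le).lt_of_ne fun h => hx.ne' ?_
  rw [← hright x hx.le, ← h, hf0]

theorem inv_le_iff_of_rightInverse (hmono : StrictMonoOn f (Ici 0))
    (hnn : ∀ t, 0 ≤ t → 0 ≤ fInv t) (hright : ∀ t, 0 ≤ t → f (fInv t) = t)
    {x s : ℝ} (hx : 0 ≤ x) (hs : 0 ≤ s) : fInv x ≤ s ↔ x ≤ f s := by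
  rw [← hmono.le_iff_le (hnn x hx) hs, hright x hx]

theorem le_inv_iff_of_rightInverse (hmono : StrictMonoOn f (Ici 0))
    (hnn : ∀ t, 0 ≤ t → 0 ≤ fInv t) (hright : ∀ t, 0 ≤ t → f (fInv t) = t)
    {x s : ℝ} (hx : 0 ≤ x) (hs : 0 ≤ s) : s ≤ fInv x ↔ f s ≤ x := by
  rw [← hmono.le_iff_le hs (hnn x hx), hright x hx]

theorem strictMonoOn_of_rightInverse (hmono : StrictMonoOn f (Ici 0))
    (hnn : ∀ t, 0 ≤ t → 0 ≤ fInv t) (hright : ∀ t, 0 ≤ t → f (fInv t) = t) :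
    StrictMonoOn fInv (Ici 0) := fun x hx y hy hxy => by
  rwa [← hmono.lt_iff_lt (hnn x hx) (hnn y hy), hright x hx, hright y hy]

theorem continuousAt_of_rightInverse (hf0 : f 0 = 0) (hmono : StrictMonoOn f (Ici 0))
    (hnn : ∀ t, 0 ≤ t → 0 ≤ fInv t) (hleft : ∀ r, 0 ≤ r → fInv (f r) = r)
    (hright : ∀ t, 0 ≤ t → f (fInv t) = t) {x : ℝ} (hx : 0 < x) : ContinuousAt fInv x := by
  have hpos : ∀ r, 0 < r → 0 < f r := fun r hr => hf0 ▸ hmono self_mem_Ici hr.le hr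
  have himage : fInv '' Ioi 0 = Ioi 0 := by
    refine Subset.antisymm (image_subset_iff.2 fun y hy => pos_of_rightInverse_s12 hf0 hnn hright hy)
      fun r hr => ⟨f r, hpos r hr, hleft r (le_of_lt hr)⟩
  refine ((strictMonoOn_of_rightInverse hmono hnn hright).mono Ioi_subset_Ici_self)
    |>.continuousAt_of_image_mem_nhds (Ioi_mem_nhds hx) ?_
  rw [himage]
  exact Ioi_mem_nhds (pos_of_rightInverse_s12 hf0 hnn hright hx)

variable {t : ℝ}

theorem strictAntiOn_inv_div_of_rightInverse (hmono : StrictMonoOn f (Ici 0))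
    (hnn : ∀ t, 0 ≤ t → 0 ≤ fInv t) (hright : ∀ t, 0 ≤ t → f (fInv t) = t) (ht : 0 < t) :
    StrictAntiOn (fun r => fInv (t / r)) (Ioi 0) :=
  (strictMonoOn_of_rightInverse hmono hnn hright).comp_strictAntiOn
    (fun _ hx _ _ hxy => div_lt_div_of_pos_left ht hx hxy)
    fun _ hr => (div_pos ht hr).le

theorem continuousOn_inv_div_of_rightInverse (hf0 : f 0 = 0) (hmono : StrictMonoOn f (Ici 0))
    (hnn : ∀ t, 0 ≤ t → 0 ≤ fInv t) (hleft : ∀ r, 0 ≤ r → fInv (f r) = r)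
    (hright : ∀ t, 0 ≤ t → f (fInv t) = t) (ht : 0 < t) :
    ContinuousOn (fun r => fInv (t / r)) (Ioi 0) := fun _ hr =>
  ((continuousAt_of_rightInverse hf0 hmono hnn hleft hright (div_pos ht hr)).comp
    (continuousAt_const.div continuousAt_id (ne_of_gt hr))).continuousWithinAt

theorem tendsto_inv_div_atTop_of_rightInverse (hf0 : f 0 = 0) (hmono : StrictMonoOn f (Ici 0))
    (hnn : ∀ t, 0 ≤ t → 0 ≤ fInv t) (hright : ∀ t, 0 ≤ t → f (fInv t) = t) (ht : 0 < t) :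
    Tendsto (fun r => fInv (t / r)) atTop (𝓝 0) := by
  have hdiv : Tendsto (fun r => t / r) atTop (𝓝 0) := tendsto_const_nhds.div_atTop tendsto_id
  refine tendsto_order.2 ⟨fun b hb => (eventually_gt_atTop 0).mono fun r hr =>
    hb.trans_le (hnn _ (div_pos ht hr).le), fun ε hε => ?_⟩
  have hfε : 0 < f ε := hf0 ▸ hmono self_mem_Ici hε.le hε
  filter_upwards [eventually_gt_atTop 0, hdiv.eventually (gt_mem_nhds hfε)] with r hr hlt
  exact lt_of_not_ge fun h =>
    ((le_inv_iff_of_rightInverse hmono hnn hright (div_pos ht hr).le hε.le).1 h).not_gt hlt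

end RightInverse

theorem monotoneOn_exp_mul_div {c : ℝ} (hc : 0 < c) :
    MonotoneOn (fun u => exp (c * u) / u) (Ici c⁻¹) := by
  intro u hu v _ huv
  have hu0 : 0 < u := (inv_pos.2 hc).trans_le hu
  have hcu : 1 ≤ c * u := by rwa [← inv_mul_le_iff₀ hc, mul_one]
  -- `exp (c (v - u)) ≥ 1 + c (v - u) ≥ 1 + (v - u) / u = v / u`
  have hexp : v ≤ exp (c * (v - u)) * u := calc
    v ≤ (c * (v - u) + 1) * u := by nlinarith
    _ ≤ exp (c * (v - u)) * u := by gcongr; exact add_one_le_exp _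
  rw [div_le_div_iff₀ hu0 (hu0.trans_le huv)]
  calc exp (c * u) * v ≤ exp (c * u) * (exp (c * (v - u)) * u) := by gcongr
    _ = exp (c * v) * u := by rw [← mul_assoc, ← exp_add]; ring_nf

theorem existsUnique_eq_of_strictMonoOn_sub {F₁ F₂ : ℝ → ℝ} {L r₁ r₂ : ℝ}
    (hmono : StrictMonoOn (fun r => F₁ r - F₂ r) (Ioi L))
    (hcont : ContinuousOn (fun r => F₁ r - F₂ r) (Ioi L))
    (hr₁ : L < r₁) (hr₁₂ : r₁ ≤ r₂) (h₁ : F₁ r₁ < F₂ r₁) (h₂ : F₂ r₂ < F₁ r₂) :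
    ∃! rs, L < rs ∧ F₁ rs = F₂ rs ∧ (∀ r, L < r → r < rs → F₁ r < F₂ r) ∧
      (∀ r, rs < r → F₂ r < F₁ r) := by
  obtain ⟨rs, hrs, hzero⟩ := intermediate_value_Icc hr₁₂
    (hcont.mono fun r hr => hr₁.trans_le hr.1)
    (show (0 : ℝ) ∈ Icc (F₁ r₁ - F₂ r₁) (F₁ r₂ - F₂ r₂) from ⟨by linarith, by linarith⟩)
  have hLrs : L < rs := hr₁.trans_le hrs.1
  have heq : F₁ rs = F₂ rs := sub_eq_zero.1 hzero
  refine ⟨rs, ⟨hLrs, heq, fun r hr hrrs => ?_, fun r hr => ?_⟩, ?_⟩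
  · exact sub_neg.1 (hzero ▸ hmono hr hLrs hrrs)
  · exact sub_pos.1 (hzero ▸ hmono hLrs (hLrs.trans hr) hr)
  · rintro y ⟨hy, -, hbelow, habove⟩
    rcases lt_trichotomy y rs with h | h | h
    · exact ((habove rs h).ne heq.symm).elim
    · exact h
    · exact ((hbelow rs hLrs h).ne heq).elim

theorem existsUnique_crossing {g : ℝ → ℝ} {c C J L r₁ : ℝ} (hc : 0 < c) (hC : 0 < C)
    (hJ : 0 < J) (hL : 0 ≤ L) (hLr₁ : L < r₁)
    (hg_pos : ∀ r, 0 < r → 0 < g r) (hg_anti : StrictAntiOn g (Ioi 0))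
    (hg_cont : ContinuousOn g (Ioi 0)) (hg_lim : Tendsto g atTop (𝓝 0))
    (hslope : ∀ r, L < r → c⁻¹ ≤ r / g r)
    (hr₁ : exp (c * (r₁ / g r₁)) / (r₁ / g r₁) < C * g r₁ / J) :
    ∃! rs, L < rs ∧ exp (c * (rs / g rs)) / (rs / g rs) = C * g rs / J ∧
      (∀ r, L < r → r < rs → exp (c * (r / g r)) / (r / g r) < C * g r / J) ∧
      (∀ r, rs < r → C * g r / J < exp (c * (r / g r)) / (r / g r)) := by
  have hsub : Ioi L ⊆ Ioi 0 := Ioi_subset_Ioi hL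
  have hu_mono : StrictMonoOn (fun r => r / g r) (Ioi L) := fun x hx y hy hxy => calc
    x / g x < y / g x := div_lt_div_of_pos_right hxy (hg_pos x (hsub hx))
    _ < y / g y := div_lt_div_of_pos_left (hsub hy) (hg_pos y (hsub hy))
      (hg_anti (hsub hx) (hsub hy) hxy)
  have hmono : StrictMonoOn
      (fun r => exp (c * (r / g r)) / (r / g r) - C * g r / J) (Ioi L) := by
    simp only [sub_eq_add_neg]
    refine ((monotoneOn_exp_mul_div hc).comp hu_mono.monotoneOn hslope).add_strictMono
      (StrictAntiOn.neg fun x hx y hy hxy => ?_)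
    gcongr
    exact hg_anti (hsub hx) (hsub hy) hxy
  have hcont : ContinuousOn
      (fun r => exp (c * (r / g r)) / (r / g r) - C * g r / J) (Ioi L) := by
    have hg : ContinuousOn g (Ioi L) := hg_cont.mono hsub
    have hu : ContinuousOn (fun r => r / g r) (Ioi L) :=
      continuousOn_id.div hg fun r hr => (hg_pos r (hsub hr)).ne'
    refine ((continuous_exp.comp_continuousOn (hu.const_smul c)).div hu fun r hr => ?_).sub
      ((hg.const_smul C).div_const J)
    exact (div_pos (hsub hr) (hg_pos r (hsub hr))).ne'
  obtain ⟨r₂, hg₂, hr₂⟩ :=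
    ((hg_lim.eventually (gt_mem_nhds (by positivity : 0 < c * J / C))).and
      (eventually_ge_atTop r₁)).exists
  have hr₂0 : 0 < r₂ := hsub (hLr₁.trans_le hr₂)
  have hu₂ : 0 < r₂ / g r₂ := div_pos hr₂0 (hg_pos r₂ hr₂0)
  have h₂ : C * g r₂ / J < exp (c * (r₂ / g r₂)) / (r₂ / g r₂) := calc
    C * g r₂ / J < c := by rwa [div_lt_iff₀ hJ, ← lt_div_iff₀' hC]
    _ ≤ exp (c * (r₂ / g r₂)) / (r₂ / g r₂) := by
      rw [le_div_iff₀ hu₂]; linarith [add_one_le_exp (c * (r₂ / g r₂))]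
  exact existsUnique_eq_of_strictMonoOn_sub hmono hcont hLr₁ hr₂ hr₁ h₂

theorem exists_pos_le_one_rpow_le {p ε : ℝ} (hp : 0 < p) (hε : 0 < ε) :
    ∃ ν : ℝ, 0 < ν ∧ ν ≤ 1 ∧ ν ^ p ≤ ε := by
  refine ⟨min 1 (ε ^ p⁻¹), lt_min one_pos (rpow_pos_of_pos hε _), min_le_left _ _, ?_⟩
  calc min 1 (ε ^ p⁻¹) ^ p ≤ (ε ^ p⁻¹) ^ p := by gcongr; exact min_le_right _ _
    _ = ε := rpow_inv_rpow hε.le hp.ne'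

theorem exp_mul_div_lt {c M ν s J x : ℝ} (hc : 0 < c) (hM : 0 < M) (hν : 0 < ν) (hs : 0 < s)
    (hJ : 0 < J) (hJs : J ≤ s) (hx : ν * s ≤ x) (hslope : c⁻¹ ≤ M * s / x) :
    exp (c * (M * s / x)) / (M * s / x) < (exp (c * (M / ν)) / (M / ν) / ν + 1) * x / J := by
  have hx0 : 0 < x := (mul_pos hν hs).trans_le hx
  have hu : M * s / x ≤ M / ν := by
    rw [div_le_div_iff₀ hx0 hν, mul_assoc, mul_comm s]; gcongr
  calc exp (c * (M * s / x)) / (M * s / x) ≤ exp (c * (M / ν)) / (M / ν) :=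
        monotoneOn_exp_mul_div hc hslope (hslope.trans hu) hu
    _ < (exp (c * (M / ν)) / (M / ν) / ν + 1) * ν := by field_simp; linarith
    _ = (exp (c * (M / ν)) / (M / ν) / ν + 1) * (ν * s) / s := by field_simp
    _ ≤ (exp (c * (M / ν)) / (M / ν) / ν + 1) * x / J := by gcongr

section Comparison

variable {φc ψ ψInv : ℝ → ℝ} {a : ℝ}

theorem le_div_inv_div_of_mul_lt (hψ0 : ψ 0 = 0) (hψMono : StrictMonoOn ψ (Ici 0))
    (hψInv_nonneg : ∀ t, 0 ≤ t → 0 ≤ ψInv t) (hψInv_right : ∀ t, 0 ≤ t → ψ (ψInv t) = t)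
    (hψ_lower : ∀ r, 0 < r → a⁻¹ * (φc r / r) ≤ ψ r) (ha : 0 < a)
    {s r C : ℝ} (hs : 0 < s) (hφs : 0 < φc s) (haC : a ≤ C) (hr : C * s < r) :
    C ≤ r / ψInv (φc s / r) := by
  have hr0 : 0 < r := (mul_pos (ha.trans_le haC) hs).trans hr
  have hg_pos : 0 < ψInv (φc s / r) :=
    pos_of_rightInverse_s12 hψ0 hψInv_nonneg hψInv_right (div_pos hφs hr0)
  have hg_le : ψInv (φc s / r) ≤ s := by
    rw [inv_le_iff_of_rightInverse hψMono hψInv_nonneg hψInv_right (by positivity) hs.le]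
    calc φc s / r ≤ φc s / (a * s) := by gcongr; nlinarith
      _ = a⁻¹ * (φc s / s) := by field_simp
      _ ≤ ψ s := hψ_lower s hs
  rw [le_div_iff₀ hg_pos]
  calc C * ψInv (φc s / r) ≤ C * s := by gcongr; linarith
    _ ≤ r := hr.le

theorem apply_mul_le_rpow_mul (hφc0 : φc 0 = 0) (hφcMono : StrictMonoOn φc (Ici 0))
    {c₁ β₁ : ℝ} (hc₁ : 0 < c₁)
    (hscale : ∀ r R, 0 < r → r ≤ R → c₁ * (R / r) ^ β₁ ≤ φc R / φc r)
    (hψ_upper : ∀ r, 0 < r → ψ r ≤ a * (φc r / r)) (ha : 0 ≤ a)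
    {ν s : ℝ} (hν : 0 < ν) (hν1 : ν ≤ 1) (hs : 0 < s) :
    ψ (ν * s) ≤ a / c₁ * ν ^ (β₁ - 1) * (φc s / s) := by
  have hνs : 0 < ν * s := mul_pos hν hs
  have hφνs : 0 < φc (ν * s) := hφc0 ▸ hφcMono self_mem_Ici hνs.le hνs
  have hφ : φc (ν * s) ≤ ν ^ β₁ * φc s / c₁ := by
    have h := hscale (ν * s) s hνs (mul_le_of_le_one_left hs.le hν1)
    rw [show s / (ν * s) = ν⁻¹ by field_simp, inv_rpow hν.le, le_div_iff₀ hφνs] at h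
    rw [le_div_iff₀ hc₁]
    calc φc (ν * s) * c₁ = ν ^ β₁ * (c₁ * (ν ^ β₁)⁻¹ * φc (ν * s)) := by
          field_simp [(rpow_pos_of_pos hν β₁).ne']
      _ ≤ ν ^ β₁ * φc s := by gcongr
  calc ψ (ν * s) ≤ a * (φc (ν * s) / (ν * s)) := hψ_upper _ hνs
    _ ≤ a * (ν ^ β₁ * φc s / c₁ / (ν * s)) := by gcongr
    _ = a / c₁ * ν ^ (β₁ - 1) * (φc s / s) := by
      rw [rpow_sub_one hν.ne']; field_simp

theorem mul_le_inv_div_of_rpow_le (hφc0 : φc 0 = 0) (hφcMono : StrictMonoOn φc (Ici 0))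
    {c₁ β₁ : ℝ} (hc₁ : 0 < c₁)
    (hscale : ∀ r R, 0 < r → r ≤ R → c₁ * (R / r) ^ β₁ ≤ φc R / φc r)
    (hψMono : StrictMonoOn ψ (Ici 0)) (hψInv_nonneg : ∀ t, 0 ≤ t → 0 ≤ ψInv t)
    (hψInv_right : ∀ t, 0 ≤ t → ψ (ψInv t) = t)
    (hψ_upper : ∀ r, 0 < r → ψ r ≤ a * (φc r / r)) (ha : 0 < a)
    {ν s M : ℝ} (hν : 0 < ν) (hν1 : ν ≤ 1) (hs : 0 < s) (hφs : 0 < φc s) (hM : 0 < M)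
    (hνM : ν ^ (β₁ - 1) ≤ c₁ / a / M) :
    ν * s ≤ ψInv (φc s / (M * s)) := by
  rw [le_inv_iff_of_rightInverse hψMono hψInv_nonneg hψInv_right (by positivity) (by positivity)]
  calc ψ (ν * s) ≤ a / c₁ * ν ^ (β₁ - 1) * (φc s / s) :=
        apply_mul_le_rpow_mul hφc0 hφcMono hc₁ hscale hψ_upper ha.le hν hν1 hs
    _ ≤ a / c₁ * (c₁ / a / M) * (φc s / s) := by gcongr
    _ = φc s / (M * s) := by field_simp

end Comparison

theorem stmt_12_general
    (φc φcInv : ℝ → ℝ) (hφc0 : φc 0 = 0)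
    (hφcMono : StrictMonoOn φc (Ici 0))
    (hφcInv_nonneg : ∀ t : ℝ, 0 ≤ t → 0 ≤ φcInv t)
    (hφcInv_right : ∀ t : ℝ, 0 ≤ t → φc (φcInv t) = t)
    (c₁ c₂ β₁ β₂ : ℝ) (hc₁ : 0 < c₁) (hβ₁ : 1 < β₁)
    (hφcScale : ∀ r R : ℝ, 0 < r → r ≤ R →
      c₁ * (R / r) ^ β₁ ≤ φc R / φc r ∧ φc R / φc r ≤ c₂ * (R / r) ^ β₂)
    (ψ ψInv : ℝ → ℝ) (a : ℝ) (ha : 1 ≤ a)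
    (hψ0 : ψ 0 = 0) (hψMono : StrictMonoOn ψ (Ici 0))
    (hψInv_nonneg : ∀ t : ℝ, 0 ≤ t → 0 ≤ ψInv t)
    (hψInv_left : ∀ r : ℝ, 0 ≤ r → ψInv (ψ r) = r)
    (hψInv_right : ∀ t : ℝ, 0 ≤ t → ψ (ψInv t) = t)
    (hψcomp : ∀ r : ℝ, 0 < r → a⁻¹ * (φc r / r) ≤ ψ r ∧ ψ r ≤ a * (φc r / r))
    (φj φjInv : ℝ → ℝ) (hφj0 : φj 0 = 0)
    (hφjInv_nonneg : ∀ t : ℝ, 0 ≤ t → 0 ≤ φjInv t)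
    (hφjInv_right : ∀ t : ℝ, 0 ≤ t → φj (φjInv t) = t)
    (hInvle : ∀ t : ℝ, 1 ≤ t → φjInv t ≤ φcInv t) :
    ∀ Cs : ℝ, 0 < Cs → ∃ C₀ Cstar : ℝ, 0 < C₀ ∧ 0 < Cstar ∧ ∀ t : ℝ, 1 ≤ t →
      ∃! rs : ℝ, C₀ * φcInv t < rs ∧
        Real.exp (Cs * (rs / ψInv (t / rs))) / (rs / ψInv (t / rs)) =
          Cstar * ψInv (t / rs) / φjInv t ∧
        (∀ r : ℝ, C₀ * φcInv t < r → r < rs →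
          Real.exp (Cs * (r / ψInv (t / r))) / (r / ψInv (t / r)) <
            Cstar * ψInv (t / r) / φjInv t) ∧
        (∀ r : ℝ, rs < r →
          Cstar * ψInv (t / r) / φjInv t <
            Real.exp (Cs * (r / ψInv (t / r))) / (r / ψInv (t / r))) := by
  intro Cs hCs
  have ha0 : 0 < a := one_pos.trans_le ha
  set C₀ := a + Cs⁻¹
  set M := C₀ + 1
  obtain ⟨ν, hν, hν1, hνβ⟩ :=
    exists_pos_le_one_rpow_le (sub_pos.2 hβ₁) (by positivity : 0 < c₁ / a / M)
  refine ⟨C₀, exp (Cs * (M / ν)) / (M / ν) / ν + 1, by positivity, by positivity, fun t ht => ?_⟩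
  have ht0 : 0 < t := one_pos.trans_le ht
  set r₀ := φcInv t
  have hr₀ : 0 < r₀ := pos_of_rightInverse_s12 hφc0 hφcInv_nonneg hφcInv_right ht0
  have hφcr₀ : φc r₀ = t := hφcInv_right t ht0.le
  have hJ : 0 < φjInv t := pos_of_rightInverse_s12 hφj0 hφjInv_nonneg hφjInv_right ht0
  have hg_pos : ∀ r, 0 < r → 0 < ψInv (t / r) := fun r hr =>
    pos_of_rightInverse_s12 hψ0 hψInv_nonneg hψInv_right (div_pos ht0 hr)
  have hslope : ∀ r, C₀ * r₀ < r → Cs⁻¹ ≤ r / ψInv (t / r) := fun r hr =>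
    (le_add_of_nonneg_left ha0.le).trans <| hφcr₀ ▸ le_div_inv_div_of_mul_lt hψ0 hψMono
      hψInv_nonneg hψInv_right (fun r hr => (hψcomp r hr).1) ha0 hr₀ (hφcr₀ ▸ ht0)
      (le_add_of_nonneg_right (by positivity)) hr
  have hr₁ : C₀ * r₀ < M * r₀ := by gcongr; linarith
  refine existsUnique_crossing hCs (by positivity) hJ (by positivity) hr₁ hg_pos
    (strictAntiOn_inv_div_of_rightInverse hψMono hψInv_nonneg hψInv_right ht0)
    (continuousOn_inv_div_of_rightInverse hψ0 hψMono hψInv_nonneg hψInv_left hψInv_right ht0)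
    (tendsto_inv_div_atTop_of_rightInverse hψ0 hψMono hψInv_nonneg hψInv_right ht0) hslope ?_
  have hg₁ : ν * r₀ ≤ ψInv (t / (M * r₀)) := hφcr₀ ▸ mul_le_inv_div_of_rpow_le hφc0 hφcMono hc₁
    (fun r R hr hrR => (hφcScale r R hr hrR).1) hψMono hψInv_nonneg hψInv_right
    (fun r hr => (hψcomp r hr).2) ha0 hν hν1 hr₀ (hφcr₀ ▸ ht0) (by positivity) hνβ
  exact exp_mul_div_lt hCs (by positivity) hν hr₀ hJ (hInvle t ht) hg₁ (hslope _ hr₁)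

/-- Lemma `L:keyexist`(ii): for every `C* > 0` there are `C₀, C^* > 0` such
that for each `t ≥ 1` there is a unique crossing point `r_*(t) ∈ (C₀ φ_c⁻¹(t), ∞)` of
`F_{1,t}(r) = exp(C* r/ψ⁻¹(t/r)) / (r/ψ⁻¹(t/r))` and `F_{2,t}(r) = C^* ψ⁻¹(t/r)/φ_j⁻¹(t)`,
with `F_{1,t} < F_{2,t}` before it and `F_{1,t} > F_{2,t}` after it. -/
theorem stmt_12
    (φc φcInv : ℝ → ℝ) (hφc0 : φc 0 = 0)
    (hφcMono : StrictMonoOn φc (Ici 0)) (hφcCont : ContinuousOn φc (Ici 0))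
    (hφcInv_nonneg : ∀ t : ℝ, 0 ≤ t → 0 ≤ φcInv t)
    (hφcInv_left : ∀ r : ℝ, 0 ≤ r → φcInv (φc r) = r)
    (hφcInv_right : ∀ t : ℝ, 0 ≤ t → φc (φcInv t) = t)
    (c₁ c₂ β₁ β₂ : ℝ) (hc₁ : 0 < c₁) (hc₂ : 0 < c₂) (hβ₁ : 1 < β₁) (hβ₁₂ : β₁ ≤ β₂)
    (hφcScale : ∀ r R : ℝ, 0 < r → r ≤ R →
      c₁ * (R / r) ^ β₁ ≤ φc R / φc r ∧ φc R / φc r ≤ c₂ * (R / r) ^ β₂)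
    (ψ ψInv : ℝ → ℝ) (a : ℝ) (ha : 1 ≤ a)
    (hψ0 : ψ 0 = 0) (hψMono : StrictMonoOn ψ (Ici 0))
    (hψInv_nonneg : ∀ t : ℝ, 0 ≤ t → 0 ≤ ψInv t)
    (hψInv_left : ∀ r : ℝ, 0 ≤ r → ψInv (ψ r) = r)
    (hψInv_right : ∀ t : ℝ, 0 ≤ t → ψ (ψInv t) = t)
    (hψcomp : ∀ r : ℝ, 0 < r → a⁻¹ * (φc r / r) ≤ ψ r ∧ ψ r ≤ a * (φc r / r))
    (φj φjInv : ℝ → ℝ) (hφj0 : φj 0 = 0) (hφjMono : StrictMonoOn φj (Ici 0))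
    (hφjInv_nonneg : ∀ t : ℝ, 0 ≤ t → 0 ≤ φjInv t)
    (hφjInv_left : ∀ r : ℝ, 0 ≤ r → φjInv (φj r) = r)
    (hφjInv_right : ∀ t : ℝ, 0 ≤ t → φj (φjInv t) = t)
    (hInvle : ∀ t : ℝ, 1 ≤ t → φjInv t ≤ φcInv t) :
    ∀ Cs : ℝ, 0 < Cs → ∃ C₀ Cstar : ℝ, 0 < C₀ ∧ 0 < Cstar ∧ ∀ t : ℝ, 1 ≤ t →
      ∃! rs : ℝ, C₀ * φcInv t < rs ∧
        Real.exp (Cs * (rs / ψInv (t / rs))) / (rs / ψInv (t / rs)) =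
          Cstar * ψInv (t / rs) / φjInv t ∧
        (∀ r : ℝ, C₀ * φcInv t < r → r < rs →
          Real.exp (Cs * (r / ψInv (t / r))) / (r / ψInv (t / r)) <
            Cstar * ψInv (t / r) / φjInv t) ∧
        (∀ r : ℝ, rs < r →
          Cstar * ψInv (t / r) / φjInv t <
            Real.exp (Cs * (r / ψInv (t / r))) / (r / ψInv (t / r))) :=
  stmt_12_general φc φcInv hφc0 hφcMono hφcInv_nonneg hφcInv_right c₁ c₂ β₁ β₂ hc₁ hβ₁ hφcScale ψ
    ψInv a ha hψ0 hψMono hψInv_nonneg hψInv_left hψInv_right hψcomp φj φjInv hφj0 hφjInv_nonneg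
    hφjInv_right hInvle
end

section
/- Let φ : [0,∞) → [0,∞) be a strictly increasing function with φ(R)/φ(r) ≤ c₂ (R/r)^{β₂} for all 0 < r ≤ R, for some constants c₂ > 0 and β₂ > 1. Let ψ : [0,∞) → [0,∞) be a strictly increasing bijection with a^{-1} φ(r)/r ≤ ψ(r) ≤ a φ(r)/r for all r > 0, for some a ≥ 1. Then there exists a constant c > 0 such that for all t, r > 0 with φ(r) ≥ a² t, one has ψ^{-1}(t/r) ≤ r and r/ψ^{-1}(t/r) ≥ c (φ(r)/t)^{1/(β₂-1)}. -/
open Set Real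

/-!
Put `s = ψ⁻¹(t/r)`. Since `t/r ≤ a⁻¹ φ(r)/r ≤ ψ(r)`, monotonicity of `ψ` gives `s ≤ r`.
Comparability of `ψ` with `φ(·)/·` at `s` gives `φ(s) ≤ a s ψ(s) = a s t / r`, and the upper
scaling of `φ` from `s` to `r` turns this into `φ(r) ≤ c₂ a t (r/s)^{β₂-1}`; taking
`(β₂-1)`-th roots yields the bound with `c = (c₂ a)^{-1/(β₂-1)}`.
-/

lemma le_mul_rpow_sub_one_of_scaling {φ : ℝ → ℝ} {c β M s r : ℝ} (hc : 0 ≤ c) (hs : 0 < s)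
    (hr : 0 < r) (hφs : 0 < φ s) (hscale : φ r / φ s ≤ c * (r / s) ^ β)
    (hup : φ s ≤ s / r * M) : φ r ≤ c * M * (r / s) ^ (β - 1) := by
  rw [div_le_iff₀ hφs] at hscale
  calc φ r ≤ c * (r / s) ^ β * φ s := hscale
    _ ≤ c * (r / s) ^ β * (s / r * M) := by gcongr
    _ = c * M * (r / s) ^ (β - 1) := by
      rw [rpow_sub_one (div_pos hr hs).ne']
      field_simp

lemma inv_rpow_mul_rpow_le_of_le_mul_rpow_s13 {x y C p : ℝ} (hx : 0 ≤ x) (hy : 0 ≤ y) (hC : 0 < C)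
    (hp : 0 < p) (h : x ≤ C * y ^ p) : C⁻¹ ^ (1 / p) * x ^ (1 / p) ≤ y := by
  rw [← mul_rpow (inv_nonneg.2 hC.le) hx, one_div, rpow_inv_le_iff_of_pos (by positivity) hy hp,
    inv_mul_le_iff₀ hC]
  exact h

lemma div_le_inv_mul_div_of_sq_mul_le {a t x r : ℝ} (ha : 1 ≤ a) (ht : 0 ≤ t) (hr : 0 ≤ r)
    (h : a ^ 2 * t ≤ x) : t / r ≤ a⁻¹ * (x / r) := by
  rw [← mul_div_assoc]
  gcongr
  rw [le_inv_mul_iff₀ (one_pos.trans_le ha)]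
  exact le_trans (by gcongr; exact le_self_pow₀ ha two_ne_zero) h

theorem stmt_13_general (φ : ℝ → ℝ)
    (c₂ β₂ : ℝ) (hc₂ : 0 < c₂) (hβ₂ : 1 < β₂)
    (hscale : ∀ r R : ℝ, 0 < r → r ≤ R → φ R / φ r ≤ c₂ * (R / r) ^ β₂)
    (ψ ψInv : ℝ → ℝ) (a : ℝ) (ha : 1 ≤ a)
    (hψ0 : ψ 0 = 0) (hψMono : StrictMonoOn ψ (Ici 0))
    (hψInv_nonneg : ∀ t : ℝ, 0 ≤ t → 0 ≤ ψInv t)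
    (hψInv_right : ∀ t : ℝ, 0 ≤ t → ψ (ψInv t) = t)
    (hψcomp : ∀ r : ℝ, 0 < r → a⁻¹ * (φ r / r) ≤ ψ r ∧ ψ r ≤ a * (φ r / r)) :
    ∃ c : ℝ, 0 < c ∧ ∀ t r : ℝ, 0 < t → 0 < r → a ^ 2 * t ≤ φ r →
      ψInv (t / r) ≤ r ∧ c * (φ r / t) ^ (1 / (β₂ - 1)) ≤ r / ψInv (t / r) := by
  have ha0 : 0 < a := one_pos.trans_le ha
  refine ⟨(c₂ * a)⁻¹ ^ (1 / (β₂ - 1)), by positivity, fun t r ht hr hφr => ?_⟩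
  have htr : 0 < t / r := div_pos ht hr
  set s := ψInv (t / r)
  have hψs : ψ s = t / r := hψInv_right _ htr.le
  have hs : 0 < s := (hψInv_nonneg _ htr.le).lt_of_ne fun h => by
    change 0 = s at h
    rw [← h, hψ0] at hψs
    exact htr.ne hψs
  have hsr : s ≤ r := by
    rw [← hψMono.le_iff_le hs.le hr.le, hψs]
    exact (div_le_inv_mul_div_of_sq_mul_le ha ht.le hr.le hφr).trans (hψcomp r hr).1
  obtain ⟨hψs_lower, hψs_upper⟩ := hψcomp s hs
  rw [hψs] at hψs_lower hψs_upper
  have hφs : 0 < φ s :=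
    (div_pos_iff_of_pos_right hs).1 (pos_of_mul_pos_right (htr.trans_le hψs_upper) ha0.le)
  have hφs_le : φ s ≤ s / r * (a * t) := by
    rw [inv_mul_le_iff₀ ha0, div_le_iff₀ hs] at hψs_lower
    exact hψs_lower.trans_eq (by ring)
  have hφr_le := le_mul_rpow_sub_one_of_scaling hc₂.le hs hr hφs (hscale s r hs hsr) hφs_le
  have hφr_pos : 0 < φ r := (by positivity : 0 < a ^ 2 * t).trans_le hφr
  refine ⟨hsr, inv_rpow_mul_rpow_le_of_le_mul_rpow_s13 (div_pos hφr_pos ht).le (div_pos hr hs).le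
    (by positivity) (sub_pos.2 hβ₂) ((div_le_iff₀ ht).2 (hφr_le.trans_eq (by ring)))⟩

/-- if `φ(r) ≥ a² t` then `ψ⁻¹(t/r) ≤ r` and
`r/ψ⁻¹(t/r) ≥ c (φ(r)/t)^{1/(β₂-1)}`. -/
theorem stmt_13 (φ : ℝ → ℝ) (hφMono : StrictMonoOn φ (Ici 0))
    (hφnonneg : ∀ r : ℝ, 0 ≤ r → 0 ≤ φ r)
    (c₂ β₂ : ℝ) (hc₂ : 0 < c₂) (hβ₂ : 1 < β₂)
    (hscale : ∀ r R : ℝ, 0 < r → r ≤ R → φ R / φ r ≤ c₂ * (R / r) ^ β₂)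
    (ψ ψInv : ℝ → ℝ) (a : ℝ) (ha : 1 ≤ a)
    (hψ0 : ψ 0 = 0) (hψMono : StrictMonoOn ψ (Ici 0))
    (hψInv_nonneg : ∀ t : ℝ, 0 ≤ t → 0 ≤ ψInv t)
    (hψInv_left : ∀ r : ℝ, 0 ≤ r → ψInv (ψ r) = r)
    (hψInv_right : ∀ t : ℝ, 0 ≤ t → ψ (ψInv t) = t)
    (hψcomp : ∀ r : ℝ, 0 < r → a⁻¹ * (φ r / r) ≤ ψ r ∧ ψ r ≤ a * (φ r / r)) :
    ∃ c : ℝ, 0 < c ∧ ∀ t r : ℝ, 0 < t → 0 < r → a ^ 2 * t ≤ φ r →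
      ψInv (t / r) ≤ r ∧ c * (φ r / t) ^ (1 / (β₂ - 1)) ≤ r / ψInv (t / r) :=
  stmt_13_general φ c₂ β₂ hc₂ hβ₂ hscale ψ ψInv a ha hψ0 hψMono hψInv_nonneg hψInv_right hψcomp
end

section
/- Let (M,d) be a metric space and μ a Borel measure on M such that V(x,r) := μ(B(x,r)) is finite and strictly positive for all x ∈ M and r > 0, and suppose there exist constants C_μ > 0 and d₂ > 0 such that V(x,R)/V(x,r) ≤ C_μ (R/r)^{d₂} for all x ∈ M and 0 < r ≤ R. Let β > 1, γ > 0 and c > 0. Then there exists a constant C > 0 such that for all x, y ∈ M with d(x,y) > 0, ∫₀^∞ (1/V(x, u^{1/β})) · exp( - c (d(x,y)^β / u)^{1/(β-1)} ) · u^{-1-γ} du ≤ C / ( V(x, d(x,y)) · d(x,y)^{βγ} ). -/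
open MeasureTheory Set Real Metric
open scoped Nat

/-!
Put `A = d(x,y)^β` and split the integral at `u = A`. For `u > A` the radius `u^{1/β}` exceeds
`d(x,y)`, so `V(x, u^{1/β}) ≥ V(x, d(x,y))`, the exponential is at most `1`, and
`∫_A^∞ u^{-1-γ} du = A^{-γ}/γ`. For `u ≤ A`, volume doubling gives
`V(x, d(x,y)) / V(x, u^{1/β}) ≤ C_μ (A/u)^{d₂/β}`, and `exp(-z) ≤ n!/z^n` with `n` large
beats this blow-up: the integrand is at most a constant times `A^{-γ-θ} u^{θ-1}` with
`θ = n/(β-1) - d₂/β - γ > 0`, which integrates to `A^{-γ}/θ`.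
-/

lemma Real.exp_neg_le_factorial_div_pow {z : ℝ} (hz : 0 < z) (n : ℕ) :
    exp (-z) ≤ n ! / z ^ n := by
  rw [exp_neg, inv_le_comm₀ (exp_pos z) (by positivity), inv_div]
  exact pow_div_factorial_le_exp _ hz.le n

lemma lintegral_Ioc_zero_rpow_sub_one {θ A : ℝ} (hθ : 0 < θ) (hA : 0 ≤ A) :
    ∫⁻ u in Ioc 0 A, ENNReal.ofReal (u ^ (θ - 1)) = ENNReal.ofReal (A ^ θ / θ) := by
  have hint : IntegrableOn (fun u : ℝ => u ^ (θ - 1)) (Ioc 0 A) :=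
    (intervalIntegrable_iff_integrableOn_Ioc_of_le hA).mp
      (intervalIntegral.intervalIntegrable_rpow' (by linarith))
  rw [← ofReal_integral_eq_lintegral_ofReal hint
      (ae_restrict_of_forall_mem measurableSet_Ioc fun u hu => rpow_nonneg hu.1.le _),
    ← intervalIntegral.integral_of_le hA, integral_rpow (Or.inl (by linarith)),
    zero_rpow (by linarith), sub_add_cancel, sub_zero]

lemma lintegral_Ioi_rpow_neg_one_sub {γ A : ℝ} (hγ : 0 < γ) (hA : 0 < A) :
    ∫⁻ u in Ioi A, ENNReal.ofReal (u ^ (-1 - γ)) = ENNReal.ofReal (A ^ (-γ) / γ) := by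
  rw [← ofReal_integral_eq_lintegral_ofReal (integrableOn_Ioi_rpow_of_lt (by linarith) hA)
      (ae_restrict_of_forall_mem measurableSet_Ioi fun u hu => rpow_nonneg (hA.trans hu).le _),
    integral_Ioi_rpow_of_lt (by linarith) hA, show -1 - γ + 1 = -γ by ring, neg_div_neg_eq]

lemma setLIntegral_ofReal_le_const_mul {α : Type*} [MeasurableSpace α] {μ : Measure α}
    {s : Set α} (hs : MeasurableSet s) {f g : α → ℝ} {k : ℝ} (hk : 0 ≤ k)
    (hfg : ∀ u ∈ s, f u ≤ k * g u) :
    ∫⁻ u in s, ENNReal.ofReal (f u) ∂μ ≤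
      ENNReal.ofReal k * ∫⁻ u in s, ENNReal.ofReal (g u) ∂μ := by
  rw [← lintegral_const_mul' _ _ ENNReal.ofReal_ne_top]
  refine setLIntegral_mono' hs fun u hu => ?_
  rw [← ENNReal.ofReal_mul hk]
  exact ENNReal.ofReal_le_ofReal (hfg u hu)

noncomputable def subordinationIntegrand (v : ℝ → ℝ) (β γ c D u : ℝ) : ℝ :=
  1 / v (u ^ (1 / β)) * exp (-(c * (D ^ β / u) ^ (1 / (β - 1)))) * u ^ (-1 - γ)

section

variable {v : ℝ → ℝ} {Cμ d₂ β γ c D : ℝ}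

lemma subordinationIntegrand_le_of_lt (hv_pos : ∀ r, 0 < r → 0 < v r)
    (hv_mono : MonotoneOn v (Ioi 0)) (hβ : 0 < β) (hc : 0 ≤ c) (hD : 0 < D) {u : ℝ}
    (hu : D ^ β < u) :
    subordinationIntegrand v β γ c D u ≤ 1 / v D * u ^ (-1 - γ) := by
  have hu0 : 0 < u := (rpow_pos_of_pos hD β).trans hu
  have hDu : D ≤ u ^ (1 / β) := by
    rw [one_div, le_rpow_inv_iff_of_pos hD.le hu0.le hβ]
    exact hu.le
  have hv : 1 / v (u ^ (1 / β)) ≤ 1 / v D :=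
    one_div_le_one_div_of_le (hv_pos D hD) (hv_mono hD (rpow_pos_of_pos hu0 _) hDu)
  have hexp : exp (-(c * (D ^ β / u) ^ (1 / (β - 1)))) ≤ 1 :=
    exp_le_one_iff.mpr (neg_nonpos.mpr (mul_nonneg hc (rpow_nonneg (by positivity) _)))
  calc subordinationIntegrand v β γ c D u ≤ 1 / v D * 1 * u ^ (-1 - γ) := by
        unfold subordinationIntegrand
        have := hv_pos D hD
        gcongr
    _ = 1 / v D * u ^ (-1 - γ) := by rw [mul_one]

lemma subordinationIntegrand_le_of_le (hv_pos : ∀ r, 0 < r → 0 < v r)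
    (hVD : ∀ r R, 0 < r → r ≤ R → v R / v r ≤ Cμ * (R / r) ^ d₂)
    (hβ : 1 < β) (hc : 0 < c) (hD : 0 < D) (n : ℕ) {u : ℝ} (hu0 : 0 < u) (hu : u ≤ D ^ β) :
    subordinationIntegrand v β γ c D u ≤
      Cμ * n ! / c ^ n / v D * (D ^ β / u) ^ (d₂ / β - n / (β - 1)) * u ^ (-1 - γ) := by
  set t := D ^ β / u
  have ht : 0 < t := div_pos (rpow_pos_of_pos hD β) hu0
  have hr : 0 < u ^ (1 / β) := rpow_pos_of_pos hu0 _
  have hrD : u ^ (1 / β) ≤ D := by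
    rw [one_div, rpow_inv_le_iff_of_pos hu0.le hD.le (by linarith)]
    exact hu
  have hDr : (D / u ^ (1 / β)) ^ d₂ = t ^ (d₂ / β) := by
    rw [← rpow_rpow_inv hD.le (by linarith : β ≠ 0), ← inv_eq_one_div, ← div_rpow
      (by positivity) hu0.le, ← rpow_mul ht.le, inv_mul_eq_div]
  have hvol : 1 / v (u ^ (1 / β)) ≤ Cμ * t ^ (d₂ / β) / v D := by
    rw [← hDr, le_div_iff₀ (hv_pos D hD), one_div_mul_eq_div]
    exact hVD _ D hr hrD
  have hexp : exp (-(c * t ^ (1 / (β - 1)))) ≤ n ! / (c ^ n * t ^ (n / (β - 1) : ℝ)) := by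
    have hpow : (c * t ^ (1 / (β - 1))) ^ n = c ^ n * t ^ (n / (β - 1) : ℝ) := by
      rw [mul_pow, ← rpow_natCast (t ^ _), ← rpow_mul ht.le, one_div_mul_eq_div]
    rw [← hpow]
    exact exp_neg_le_factorial_div_pow (by positivity) n
  calc subordinationIntegrand v β γ c D u
      ≤ Cμ * t ^ (d₂ / β) / v D * (n ! / (c ^ n * t ^ (n / (β - 1) : ℝ))) *
          u ^ (-1 - γ) := by
        unfold subordinationIntegrand
        gcongr
        exact (one_div_pos.mpr (hv_pos _ hr)).le.trans hvol
    _ = Cμ * n ! / c ^ n / v D * t ^ (d₂ / β - n / (β - 1)) * u ^ (-1 - γ) := by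
        rw [rpow_sub ht]
        field_simp

theorem lintegral_subordinationIntegrand_le (hv_pos : ∀ r, 0 < r → 0 < v r)
    (hv_mono : MonotoneOn v (Ioi 0))
    (hVD : ∀ r R, 0 < r → r ≤ R → v R / v r ≤ Cμ * (R / r) ^ d₂) (hCμ : 0 < Cμ)
    (hβ : 1 < β) (hγ : 0 < γ) (hc : 0 < c) {n : ℕ} (hn : d₂ / β + γ < n / (β - 1))
    (hD : 0 < D) :
    ∫⁻ u in Ioi 0, ENNReal.ofReal (subordinationIntegrand v β γ c D u) ≤
      ENNReal.ofReal ((Cμ * n ! / c ^ n / (n / (β - 1) - (d₂ / β + γ)) + 1 / γ) /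
        (v D * D ^ (β * γ))) := by
  set A := D ^ β with hA_def
  set θ := n / (β - 1) - (d₂ / β + γ) with hθ_def
  set K := Cμ * n ! / c ^ n
  have hA : 0 < A := rpow_pos_of_pos hD β
  have hθ : 0 < θ := sub_pos.mpr hn
  have hvD : 0 < v D := hv_pos D hD
  have near : ∫⁻ u in Ioc 0 A, ENNReal.ofReal (subordinationIntegrand v β γ c D u) ≤
      ENNReal.ofReal (K / v D * A ^ (-(γ + θ))) * ENNReal.ofReal (A ^ θ / θ) := by
    rw [← lintegral_Ioc_zero_rpow_sub_one hθ hA.le]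
    refine setLIntegral_ofReal_le_const_mul measurableSet_Ioc (by positivity) fun u hu => ?_
    have hexp : d₂ / β - n / (β - 1) = -(γ + θ) := by rw [hθ_def]; ring
    calc subordinationIntegrand v β γ c D u
        ≤ K / v D * (A / u) ^ (-(γ + θ)) * u ^ (-1 - γ) := by
          rw [← hexp]
          exact subordinationIntegrand_le_of_le hv_pos hVD hβ hc hD n hu.1 hu.2
      _ = K / v D * A ^ (-(γ + θ)) * u ^ (θ - 1) := by
          rw [div_rpow hA.le hu.1.le, show θ - 1 = -1 - γ - -(γ + θ) by ring,
            rpow_sub hu.1 (-1 - γ)]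
          ring
  have far : ∫⁻ u in Ioi A, ENNReal.ofReal (subordinationIntegrand v β γ c D u) ≤
      ENNReal.ofReal (1 / v D) * ENNReal.ofReal (A ^ (-γ) / γ) := by
    rw [← lintegral_Ioi_rpow_neg_one_sub hγ hA]
    exact setLIntegral_ofReal_le_const_mul measurableSet_Ioi (by positivity) fun u hu =>
      subordinationIntegrand_le_of_lt hv_pos hv_mono (by linarith) hc.le hD hu
  rw [← Ioc_union_Ioi_eq_Ioi hA.le, lintegral_union measurableSet_Ioi (Ioc_disjoint_Ioi le_rfl)]
  refine (add_le_add near far).trans (le_of_eq ?_)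
  rw [← ENNReal.ofReal_mul (by positivity), ← ENNReal.ofReal_mul (by positivity),
    ← ENNReal.ofReal_add (by positivity) (by positivity)]
  congr 1
  rw [rpow_mul hD.le, ← hA_def, rpow_neg hA.le, rpow_neg hA.le, rpow_add hA]
  field_simp

end

theorem stmt_14_general {M : Type*} [MetricSpace M] [MeasurableSpace M]
    (μ : Measure M) (V : M → ℝ → ℝ)
    (hV : ∀ x r, V x r = (μ (ball x r)).toReal)
    (hfin : ∀ (x : M) (r : ℝ), 0 < r → μ (ball x r) < ⊤)
    (hpos : ∀ (x : M) (r : ℝ), 0 < r → 0 < μ (ball x r))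
    (Cμ d₂ : ℝ) (hCμ : 0 < Cμ)
    (hVD : ∀ (x : M) (r R : ℝ), 0 < r → r ≤ R → V x R / V x r ≤ Cμ * (R / r) ^ d₂)
    (β γ c : ℝ) (hβ : 1 < β) (hγ : 0 < γ) (hc : 0 < c) :
    ∃ C : ℝ, 0 < C ∧ ∀ x y : M, 0 < dist x y →
      (∫⁻ u in Ioi (0 : ℝ),
        ENNReal.ofReal ((1 / V x (u ^ (1 / β))) *
          Real.exp (-(c * ((dist x y ^ β / u) ^ (1 / (β - 1))))) * u ^ (-1 - γ))) ≤
      ENNReal.ofReal (C / (V x (dist x y) * dist x y ^ (β * γ))) := by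
  obtain ⟨n, hn⟩ : ∃ n : ℕ, d₂ / β + γ < n / (β - 1) := by
    obtain ⟨n, hn⟩ := exists_nat_gt ((d₂ / β + γ) * (β - 1))
    exact ⟨n, (lt_div_iff₀ (by linarith)).mpr hn⟩
  refine ⟨Cμ * n ! / c ^ n / (n / (β - 1) - (d₂ / β + γ)) + 1 / γ,
    by have := sub_pos.mpr hn; positivity, fun x y hxy => ?_⟩
  have hV_pos : ∀ r, 0 < r → 0 < V x r := fun r hr => by
    rw [hV]; exact ENNReal.toReal_pos (hpos x r hr).ne' (hfin x r hr).ne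
  have hV_mono : MonotoneOn (V x) (Ioi 0) := fun r _ R hR hrR => by
    rw [hV, hV]
    exact ENNReal.toReal_mono (hfin x R hR).ne (measure_mono (ball_subset_ball hrR))
  exact lintegral_subordinationIntegrand_le hV_pos hV_mono (hVD x) hCμ hβ hγ hc hn hxy

/-- under volume doubling, the subordination integral is bounded above by
`C/(V(x,d(x,y)) d(x,y)^{βγ})`. -/
theorem stmt_14 {M : Type*} [MetricSpace M] [MeasurableSpace M] [BorelSpace M]
    (μ : Measure M) (V : M → ℝ → ℝ)
    (hV : ∀ x r, V x r = (μ (ball x r)).toReal)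
    (hfin : ∀ (x : M) (r : ℝ), 0 < r → μ (ball x r) < ⊤)
    (hpos : ∀ (x : M) (r : ℝ), 0 < r → 0 < μ (ball x r))
    (Cμ d₂ : ℝ) (hCμ : 0 < Cμ) (hd₂ : 0 < d₂)
    (hVD : ∀ (x : M) (r R : ℝ), 0 < r → r ≤ R → V x R / V x r ≤ Cμ * (R / r) ^ d₂)
    (β γ c : ℝ) (hβ : 1 < β) (hγ : 0 < γ) (hc : 0 < c) :
    ∃ C : ℝ, 0 < C ∧ ∀ x y : M, 0 < dist x y →
      (∫⁻ u in Ioi (0 : ℝ),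
        ENNReal.ofReal ((1 / V x (u ^ (1 / β))) *
          Real.exp (-(c * ((dist x y ^ β / u) ^ (1 / (β - 1))))) * u ^ (-1 - γ))) ≤
      ENNReal.ofReal (C / (V x (dist x y) * dist x y ^ (β * γ))) :=
  stmt_14_general μ V hV hfin hpos Cμ d₂ hCμ hVD β γ c hβ hγ hc
end

section
/- Let (M,d) be a metric space and μ a Borel measure on M such that V(x,r) := μ(B(x,r)) is finite and strictly positive for all x ∈ M and r > 0. Let β > 1, γ > 0 and c > 0. Then there exists a constant C' > 0 such that for all x, y ∈ M with d(x,y) > 0, ∫₀^{d(x,y)^β} (1/V(x, u^{1/β})) · exp( - c (d(x,y)^β / u)^{1/(β-1)} ) · u^{-1-γ} du ≥ C' / ( V(x, d(x,y)) · d(x,y)^{βγ} ). -/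
/-!
Only the top half `(d^β / 2, d^β]` of the range of integration is used. There the radius
`u^(1/β)` is at most `d`, so `1 / V(x, u^(1/β)) ≥ 1 / V(x, d)`; the ratio `d^β / u` is below `2`,
so the exponential factor is at least `exp (-c 2^(1/(β-1)))`; and `u^(-1-γ) ≥ d^(-β(1+γ))`.
Integrating this constant over an interval of length `d^β / 2` gives the bound.
-/

open MeasureTheory Set Real Metric

lemma ofReal_mul_sub_le_setLIntegral_Ioc {f : ℝ → ℝ} {k a b : ℝ} (hk : 0 ≤ k)
    (hf : ∀ u ∈ Ioc a b, k ≤ f u) :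
    ENNReal.ofReal (k * (b - a)) ≤ ∫⁻ u in Ioc a b, ENNReal.ofReal (f u) :=
  calc ENNReal.ofReal (k * (b - a)) = ∫⁻ _ in Ioc a b, ENNReal.ofReal k := by
        rw [setLIntegral_const, Real.volume_Ioc, ENNReal.ofReal_mul hk]
    _ ≤ _ := setLIntegral_mono' measurableSet_Ioc fun u hu ↦ ENNReal.ofReal_le_ofReal (hf u hu)

lemma one_div_toReal_measure_ball_le {M : Type*} [PseudoMetricSpace M] [MeasurableSpace M]
    (μ : Measure M) (x : M) {r R : ℝ} (hr : 0 < μ (ball x r)) (hR : μ (ball x R) ≠ ⊤)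
    (hrR : r ≤ R) :
    1 / (μ (ball x R)).toReal ≤ 1 / (μ (ball x r)).toReal := by
  have hmono : μ (ball x r) ≤ μ (ball x R) := measure_mono (ball_subset_ball hrR)
  exact one_div_le_one_div_of_le (ENNReal.toReal_pos hr.ne' (ne_top_of_le_ne_top hR hmono))
    (ENNReal.toReal_mono hR hmono)

lemma exp_neg_mul_two_rpow_le {c p A u : ℝ} (hc : 0 ≤ c) (hp : 0 ≤ p) (hA : 0 ≤ A)
    (hu : 0 < u) (hAu : A ≤ 2 * u) :
    exp (-(c * 2 ^ p)) ≤ exp (-(c * (A / u) ^ p)) := by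
  have : A / u ≤ 2 := (div_le_iff₀ hu).2 hAu
  gcongr

lemma rpow_neg_one_sub_mul_self {D β γ : ℝ} (hD : 0 < D) :
    (D ^ β) ^ (-1 - γ) * D ^ β = (D ^ (β * γ))⁻¹ := by
  rw [← rpow_mul hD.le, ← rpow_add hD, show β * (-1 - γ) + β = -(β * γ) by ring,
    rpow_neg hD.le]

lemma subordination_integrand_ge {M : Type*} [PseudoMetricSpace M] [MeasurableSpace M]
    (μ : Measure M) (x : M) {β γ c D u : ℝ} (hβ : 1 < β) (hγ : 0 < γ) (hc : 0 < c)
    (hD : 0 < D) (hu : u ∈ Ioc (D ^ β / 2) (D ^ β)) (hfin : μ (ball x D) ≠ ⊤)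
    (hpos : 0 < μ (ball x (u ^ (1 / β)))) :
    1 / (μ (ball x D)).toReal * exp (-(c * 2 ^ (1 / (β - 1)))) * (D ^ β) ^ (-1 - γ) ≤
      1 / (μ (ball x (u ^ (1 / β)))).toReal * exp (-(c * (D ^ β / u) ^ (1 / (β - 1)))) *
        u ^ (-1 - γ) := by
  obtain ⟨hu₁, hu₂⟩ := hu
  have hu₀ : 0 < u := lt_trans (by positivity) hu₁
  have hradius : u ^ (1 / β) ≤ D := by
    rw [one_div, rpow_inv_le_iff_of_pos hu₀.le hD.le (by linarith)]
    exact hu₂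
  gcongr ?_ * ?_ * ?_
  · exact one_div_toReal_measure_ball_le μ x hpos hfin hradius
  · exact exp_neg_mul_two_rpow_le hc.le (one_div_nonneg.2 (by linarith))
      (by positivity) hu₀ (by linarith)
  · exact rpow_le_rpow_of_nonpos hu₀ hu₂ (by linarith)

theorem stmt_15_general {M : Type*} [MetricSpace M] [MeasurableSpace M]
    (μ : Measure M) (V : M → ℝ → ℝ)
    (hV : ∀ x r, V x r = (μ (ball x r)).toReal)
    (hfin : ∀ (x : M) (r : ℝ), 0 < r → μ (ball x r) < ⊤)
    (hpos : ∀ (x : M) (r : ℝ), 0 < r → 0 < μ (ball x r))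
    (β γ c : ℝ) (hβ : 1 < β) (hγ : 0 < γ) (hc : 0 < c) :
    ∃ C' : ℝ, 0 < C' ∧ ∀ x y : M, 0 < dist x y →
      ENNReal.ofReal (C' / (V x (dist x y) * dist x y ^ (β * γ))) ≤
      ∫⁻ u in Ioc (0 : ℝ) (dist x y ^ β),
        ENNReal.ofReal ((1 / V x (u ^ (1 / β))) *
          Real.exp (-(c * ((dist x y ^ β / u) ^ (1 / (β - 1))))) * u ^ (-1 - γ)) := by
  set E := exp (-(c * 2 ^ (1 / (β - 1))))
  refine ⟨E / 2, by positivity, fun x y hD ↦ ?_⟩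
  simp only [hV]
  set D := dist x y
  set k := 1 / (μ (ball x D)).toReal * E * (D ^ β) ^ (-1 - γ)
  have hk : E / 2 / ((μ (ball x D)).toReal * D ^ (β * γ)) = k * (D ^ β - D ^ β / 2) := by
    rw [show k * (D ^ β - D ^ β / 2) =
        E / 2 / (μ (ball x D)).toReal * ((D ^ β) ^ (-1 - γ) * D ^ β) by simp only [k]; ring,
      rpow_neg_one_sub_mul_self hD, div_mul_eq_div_div, div_eq_mul_inv _ (D ^ (β * γ))]
  calc ENNReal.ofReal (E / 2 / ((μ (ball x D)).toReal * D ^ (β * γ)))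
      = ENNReal.ofReal (k * (D ^ β - D ^ β / 2)) := by rw [hk]
    _ ≤ ∫⁻ u in Ioc (D ^ β / 2) (D ^ β), ENNReal.ofReal (1 / (μ (ball x (u ^ (1 / β)))).toReal *
          exp (-(c * (D ^ β / u) ^ (1 / (β - 1)))) * u ^ (-1 - γ)) :=
        ofReal_mul_sub_le_setLIntegral_Ioc (by positivity) fun u hu ↦
          subordination_integrand_ge μ x hβ hγ hc hD hu (hfin x D hD).ne
            (hpos x _ (rpow_pos_of_pos (lt_trans (by positivity) hu.1) _))
    _ ≤ _ := lintegral_mono_set (Ioc_subset_Ioc_left (by positivity))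

/-- lower bound for the truncated subordination integral, valid without
any doubling assumption. -/
theorem stmt_15 {M : Type*} [MetricSpace M] [MeasurableSpace M] [BorelSpace M]
    (μ : Measure M) (V : M → ℝ → ℝ)
    (hV : ∀ x r, V x r = (μ (ball x r)).toReal)
    (hfin : ∀ (x : M) (r : ℝ), 0 < r → μ (ball x r) < ⊤)
    (hpos : ∀ (x : M) (r : ℝ), 0 < r → 0 < μ (ball x r))
    (β γ c : ℝ) (hβ : 1 < β) (hγ : 0 < γ) (hc : 0 < c) :
    ∃ C' : ℝ, 0 < C' ∧ ∀ x y : M, 0 < dist x y →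
      ENNReal.ofReal (C' / (V x (dist x y) * dist x y ^ (β * γ))) ≤
      ∫⁻ u in Ioc (0 : ℝ) (dist x y ^ β),
        ENNReal.ofReal ((1 / V x (u ^ (1 / β))) *
          Real.exp (-(c * ((dist x y ^ β / u) ^ (1 / (β - 1))))) * u ^ (-1 - γ)) :=
  stmt_15_general μ V hV hfin hpos β γ c hβ hγ hc
end
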